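/- Let A be a self-adjoint generalized ring and s ∈ A_{[1]}. The canonical homomorphism Ψ : A_s → O_A(D_s), sending a/s' to the constant section 𝔭 ↦ a/s' ∈ (A_𝔭)_X, is an isomorphism of generalized rings. In particular, for s = 1, the canonical homomorphism A → O_A(spec(A)) is an isomorphism. -/

import Mathlib

open scoped Classical

noncomputable section

/-! ### Partially defined maps of finite sets -/

/-- Composition of partially defined maps of sets (`Set_•`). -/
def pcomp {X Y Z : Type} (g : Y → Option Z) (f : X → Option Y) : X → Option Z :=
  fun x => (f x).bind g

/-- The fiber of a partially defined map over a point of the target. -/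
abbrev pfib {X Y : Type} (f : X → Option Y) (y : Y) : Type := {x : X // f x = some y}

/-- The fiber of the identity partial map over `x` is a singleton. -/
def idFiberEquiv {X : Type} (x : X) : Fin 1 ≃ pfib (fun x' : X => some x') x where
  toFun _ := ⟨x, rfl⟩
  invFun _ := 0
  left_inv _ := Subsingleton.elim _ _
  right_inv p := Subtype.ext (Option.some.inj p.2).symm

/-- The fiber of the constant (total) map to the point `[1]` is everything. -/
def constFiberEquiv (X : Type) (z : Fin 1) :
    X ≃ pfib (fun _ : X => some (0 : Fin 1)) z where
  toFun x := ⟨x, congrArg some (Subsingleton.elim (0 : Fin 1) z)⟩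
  invFun p := p.1
  left_inv _ := rfl
  right_inv p := rfl

/-- The fiber of (the graph of) a bijection is a singleton. -/
def equivFiberEquiv {X Y : Type} (e : X ≃ Y) (y : Y) :
    Fin 1 ≃ pfib (fun x : X => some (e x)) y where
  toFun _ := ⟨e.symm y, congrArg some (e.apply_symm_apply y)⟩
  invFun _ := 0
  left_inv _ := Subsingleton.elim _ _
  right_inv p := Subtype.ext ((Equiv.symm_apply_eq e).mpr (Option.some.inj p.2).symm)

/-- The fiber of the map `[1] → X` with image `{x}` over `x' = x` is a singleton. -/
def pointFiberEquiv {X : Type} {x x' : X} (h : x = x') :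
    Fin 1 ≃ pfib (fun _ : Fin 1 => some x) x' where
  toFun z := ⟨z, congrArg some h⟩
  invFun p := p.1
  left_inv _ := rfl
  right_inv p := rfl

/-- Restriction of `f` to the fiber of `pcomp g f` over `z`, as a partial map into
the fiber of `g` over `z`. -/
def resMap {X Y Z : Type} (g : Y → Option Z) (f : X → Option Y) (z : Z) :
    pfib (pcomp g f) z → Option (pfib g z) :=
  fun x => (f x.1).bind fun y => if h : g y = some z then some ⟨y, h⟩ else none

/-- Identification of the fibers of the restriction `resMap g f z` with fibers of `f`. -/
def resFiberEquiv {X Y Z : Type} (g : Y → Option Z) (f : X → Option Y) (z : Z)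
    (p : pfib g z) : pfib f p.1 ≃ pfib (resMap g f z) p where
  toFun x := ⟨⟨x.1, by show (f x.1).bind g = some z; rw [x.2, Option.bind_some, p.2]⟩, by
    show (f x.1).bind _ = some p
    rw [x.2, Option.bind_some, dif_pos p.2]⟩
  invFun q := ⟨q.1.1, by
    have h := q.2
    unfold resMap at h
    rcases hf : f q.1.1 with _ | y
    · rw [hf, Option.bind_none] at h
      exact nomatch h
    · rw [hf, Option.bind_some] at h
      by_cases hg : g y = some z
      · rw [dif_pos hg] at h
        have hy : y = p.1 := congrArg Subtype.val (Option.some.inj h)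
        exact congrArg some hy
      · rw [dif_neg hg] at h
        exact nomatch h⟩
  left_inv x := Subtype.ext rfl
  right_inv q := Subtype.ext (Subtype.ext rfl)

/-! ### Fibered products -/

/-- The fibered product of two partial maps `g : Z ⇀ Y` and `f : X ⇀ Y`. -/
abbrev FP {X Y Z : Type} (g : Z → Option Y) (f : X → Option Y) : Type :=
  {p : Z × X // ∃ y : Y, g p.1 = some y ∧ f p.2 = some y}

/-- First projection of the fibered product, as a partial map. -/
def fpFst {X Y Z : Type} (g : Z → Option Y) (f : X → Option Y) : FP g f → Option Z :=
  fun p => some p.1.1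

/-- Second projection of the fibered product, as a partial map. -/
def fpSnd {X Y Z : Type} (g : Z → Option Y) (f : X → Option Y) : FP g f → Option X :=
  fun p => some p.1.2

/-- Identification of the fiber of the second projection of `Z ×_Y X` over `x`
with the fiber of `g` over `f x`. -/
def fpFiberSnd {X Y Z : Type} (g : Z → Option Y) (f : X → Option Y) {x : X} {y : Y}
    (hy : f x = some y) : pfib g y ≃ pfib (fpSnd g f) x where
  toFun w := ⟨⟨(w.1, x), ⟨y, w.2, hy⟩⟩, rfl⟩
  invFun q := ⟨q.1.1.1, by
    obtain ⟨y', hg, hf⟩ := q.1.2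
    have hx : q.1.1.2 = x := Option.some.inj q.2
    rw [hx] at hf
    have hyy : y' = y := Option.some.inj (hf.symm.trans hy)
    rw [hyy] at hg
    exact hg⟩
  left_inv w := Subtype.ext rfl
  right_inv q := by
    apply Subtype.ext
    apply Subtype.ext
    have hx : q.1.1.2 = x := Option.some.inj q.2
    exact Prod.ext rfl hx.symm

/-- Identification of the fiber of the first projection of `Z ×_Y X` over `z`
with the fiber of `f` over `g z`. -/
def fpFiberFst {X Y Z : Type} (g : Z → Option Y) (f : X → Option Y) {z : Z} {y : Y}
    (hy : g z = some y) : pfib f y ≃ pfib (fpFst g f) z where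
  toFun w := ⟨⟨(z, w.1), ⟨y, hy, w.2⟩⟩, rfl⟩
  invFun q := ⟨q.1.1.2, by
    obtain ⟨y', hg, hf⟩ := q.1.2
    have hz : q.1.1.1 = z := Option.some.inj q.2
    rw [hz] at hg
    have hyy : y' = y := Option.some.inj (hg.symm.trans hy)
    rw [hyy] at hf
    exact hf⟩
  left_inv w := Subtype.ext rfl
  right_inv q := by
    apply Subtype.ext
    apply Subtype.ext
    have hz : q.1.1.1 = z := Option.some.inj q.2
    exact Prod.ext hz.symm rfl
/-! ### Generalized rings

A generalized ring assigns to each finite set `X` a pointed set `A X`, functorially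
with respect to bijections (and hence, via the operations and units, with respect to
all partial bijections of finite sets), together with operations of multiplication
`∘ : A Y × A f → A X` and contraction `( , ) : A X × A f → A Y` for every partially
defined map `f : X ⇀ Y`, where `A f = ∏_{y ∈ Y} A (f⁻¹ y)`, and a unit `1 ∈ A [1]`,
subject to the axioms of associativity, left- and right-adjunction, left- and
right-linearity, and the unit axioms. -/

/-- The data underlying a generalized ring. -/
structure GenRingData where
  /-- the pointed set attached to a finite set `X` -/
  A : (X : Type) → [inst : Finite X] → Type
  /-- the base point `0_X ∈ A_X` -/
  zero : (X : Type) → [inst : Finite X] → A X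
  /-- the unit `1 ∈ A_{[1]}` -/
  one : A (Fin 1)
  /-- functoriality with respect to bijections of finite sets -/
  map : {X Y : Type} → [inst : Finite X] → [inst' : Finite Y] → (X ≃ Y) → A X → A Y
  /-- multiplication `∘ : A_Y × A_f → A_X` for a partially defined map `f : X ⇀ Y` -/
  mul : {X Y : Type} → [inst : Finite X] → [inst' : Finite Y] → (f : X → Option Y) →
      A Y → ((y : Y) → A (pfib f y)) → A X
  /-- contraction `( , ) : A_X × A_f → A_Y` for a partially defined map `f : X ⇀ Y` -/
  contr : {X Y : Type} → [inst : Finite X] → [inst' : Finite Y] → (f : X → Option Y) →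
      A X → ((y : Y) → A (pfib f y)) → A Y

namespace GenRingData

variable (R : GenRingData)

/-- The unit family `1_{id_X} ∈ A_{id_X}`. -/
def oneId (X : Type) [Finite X] : (x : X) → R.A (pfib (fun x' : X => some x') x) :=
  fun x => R.map (idFiberEquiv x) R.one

/-- The monoid operation `a ∘ b` on `A_{[1]}`. -/
def op (a b : R.A (Fin 1)) : R.A (Fin 1) :=
  R.mul (fun z : Fin 1 => some z) a (fun z => R.map (idFiberEquiv z) b)

/-- The `n`-fold power `a ∘ ⋯ ∘ a` in the monoid `A_{[1]}` (with `a⁰ = 1`). -/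
def opPow (a : R.A (Fin 1)) : ℕ → R.A (Fin 1)
  | 0 => R.one
  | n + 1 => R.op a (opPow a n)

/-- The left action `s ∘ a` of `A_{[1]}` on `A_X` (operation (1.2.5)). -/
def lact {X : Type} [Finite X] (s : R.A (Fin 1)) (a : R.A X) : R.A X :=
  R.mul (fun _ : X => some (0 : Fin 1)) s (fun z => R.map (constFiberEquiv X z) a)

/-- The pairing `(a, d) : A_X × A_X → A_{[1]}` (operation (1.2.6)). -/
def pair {X : Type} [Finite X] (a d : R.A X) : R.A (Fin 1) :=
  R.contr (fun _ : X => some (0 : Fin 1)) a (fun z => R.map (constFiberEquiv X z) d)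

/-- The right (diagonal) action `b ∘ c` of `(A_{[1]})^X` on `A_X` (operation (1.2.7)). -/
def ract {X : Type} [Finite X] (b : R.A X) (c : X → R.A (Fin 1)) : R.A X :=
  R.mul (fun x : X => some x) b (fun x => R.map (idFiberEquiv x) (c x))

/-- The involution `a ↦ aᵗ = (1, a)` of `A_{[1]}`. -/
def adj (a : R.A (Fin 1)) : R.A (Fin 1) := R.pair R.one a

/-- The element `(a, 1_{j_x}) ∈ A_X` obtained from `a ∈ A_{[1]}` via the
inclusion `j_x : {x} ↪ X`; for `a = 1` this is the image `1_x` of the unit. -/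
def pointElt (X : Type) [Finite X] (x : X) (a : R.A (Fin 1)) : R.A X :=
  R.contr (fun _ : Fin 1 => some x) a
    (fun x' => if h : x = x' then R.map (pointFiberEquiv h) R.one else R.zero _)

/-- The extended multiplication `A_g × A_f → A_{g∘f}`, defined fiberwise. -/
def emul {X Y Z : Type} [Finite X] [Finite Y] [Finite Z]
    (g : Y → Option Z) (f : X → Option Y)
    (c : (z : Z) → R.A (pfib g z)) (b : (y : Y) → R.A (pfib f y)) :
    (z : Z) → R.A (pfib (pcomp g f) z) :=
  fun z => R.mul (resMap g f z) (c z) (fun p => R.map (resFiberEquiv g f z p) (b p.1))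

/-- The extended contraction `A_{g∘f} × A_f → A_g`, defined fiberwise. -/
def econtr {X Y Z : Type} [Finite X] [Finite Y] [Finite Z]
    (g : Y → Option Z) (f : X → Option Y)
    (a : (z : Z) → R.A (pfib (pcomp g f) z)) (b : (y : Y) → R.A (pfib f y)) :
    (z : Z) → R.A (pfib g z) :=
  fun z => R.contr (resMap g f z) (a z) (fun p => R.map (resFiberEquiv g f z p) (b p.1))

/-- The pullback `ã ∈ A_{g̃}` of `a ∈ A_g` along the fibered product (used in
the right-linearity axiom). -/
def atilde {X Y Z : Type} [Finite X] [Finite Y] [Finite Z]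
    (g : Z → Option Y) (f : X → Option Y) (a : (y : Y) → R.A (pfib g y)) :
    (x : X) → R.A (pfib (fpSnd g f) x) :=
  fun x =>
    match hfx : f x with
    | some y => R.map (fpFiberSnd g f hfx) (a y)
    | none => R.zero _

/-- The pullback `c̃ ∈ A_{f̃}` of `c ∈ A_f` along the fibered product (used in
the right-linearity axiom). -/
def ctilde {X Y Z : Type} [Finite X] [Finite Y] [Finite Z]
    (g : Z → Option Y) (f : X → Option Y) (c : (y : Y) → R.A (pfib f y)) :
    (z : Z) → R.A (pfib (fpFst g f) z) :=
  fun z =>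
    match hgz : g z with
    | some y => R.map (fpFiberFst g f hgz) (c y)
    | none => R.zero _

end GenRingData

/-- A generalized ring: the data of `GenRingData` subject to the axioms
(pointedness, functoriality, zero laws, associativity, left/right adjunction,
left/right linearity, and the unit axioms, the latter in their reduced form over
the one-point base, which is equivalent to the general form). -/
structure GenRing where
  /-- the underlying data -/
  data : GenRingData
  /-- `A_∅ = {0}` -/
  isEmpty_eq_zero : ∀ (X : Type) [Finite X] [IsEmpty X] (a : data.A X), a = data.zero X
  /-- functoriality: identity -/
  map_refl : ∀ (X : Type) [Finite X] (a : data.A X), data.map (Equiv.refl X) a = a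
  /-- functoriality: composition -/
  map_trans : ∀ {X Y Z : Type} [Finite X] [Finite Y] [Finite Z] (e : X ≃ Y) (e' : Y ≃ Z)
      (a : data.A X), data.map (e.trans e') a = data.map e' (data.map e a)
  /-- functoriality: the maps are pointed -/
  map_zero : ∀ {X Y : Type} [Finite X] [Finite Y] (e : X ≃ Y),
      data.map e (data.zero X) = data.zero Y
  /-- `0 ∘ b = 0` -/
  mul_zero_left : ∀ {X Y : Type} [Finite X] [Finite Y] (f : X → Option Y)
      (b : (y : Y) → data.A (pfib f y)), data.mul f (data.zero Y) b = data.zero X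
  /-- `a ∘ 0_f = 0` -/
  mul_zero_right : ∀ {X Y : Type} [Finite X] [Finite Y] (f : X → Option Y) (a : data.A Y),
      data.mul f a (fun y => data.zero (pfib f y)) = data.zero X
  /-- `(0, b) = 0` -/
  contr_zero_left : ∀ {X Y : Type} [Finite X] [Finite Y] (f : X → Option Y)
      (b : (y : Y) → data.A (pfib f y)), data.contr f (data.zero X) b = data.zero Y
  /-- `(a, 0_f) = 0` -/
  contr_zero_right : ∀ {X Y : Type} [Finite X] [Finite Y] (f : X → Option Y) (a : data.A X),
      data.contr f a (fun y => data.zero (pfib f y)) = data.zero Y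
  /-- associativity: `d ∘ (c ∘ b) = (d ∘ c) ∘ b` -/
  assoc : ∀ {X Y Z : Type} [Finite X] [Finite Y] [Finite Z]
      (g : Y → Option Z) (f : X → Option Y) (d : data.A Z)
      (c : (z : Z) → data.A (pfib g z)) (b : (y : Y) → data.A (pfib f y)),
      data.mul (pcomp g f) d (data.emul g f c b) = data.mul f (data.mul g d c) b
  /-- left-adjunction: `(d, a ∘ c) = ((d, c), a)` -/
  left_adj : ∀ {X Y Z : Type} [Finite X] [Finite Y] [Finite Z]
      (g : Y → Option Z) (f : X → Option Y) (d : data.A X)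
      (a : (z : Z) → data.A (pfib g z)) (c : (y : Y) → data.A (pfib f y)),
      data.contr (pcomp g f) d (data.emul g f a c) = data.contr g (data.contr f d c) a
  /-- right-adjunction: `(d ∘ c, a) = (d, (a, c))` -/
  right_adj : ∀ {X Y Z : Type} [Finite X] [Finite Y] [Finite Z]
      (g : Y → Option Z) (f : X → Option Y) (d : data.A Y)
      (a : (z : Z) → data.A (pfib (pcomp g f) z)) (c : (y : Y) → data.A (pfib f y)),
      data.contr (pcomp g f) (data.mul f d c) a = data.contr g d (data.econtr g f a c)
  /-- left-linearity: `(d ∘ a, c) = d ∘ (a, c)` -/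
  left_lin : ∀ {X Y Z : Type} [Finite X] [Finite Y] [Finite Z]
      (g : Y → Option Z) (f : X → Option Y) (d : data.A Z)
      (a : (z : Z) → data.A (pfib (pcomp g f) z)) (c : (y : Y) → data.A (pfib f y)),
      data.contr f (data.mul (pcomp g f) d a) c = data.mul g d (data.econtr g f a c)
  /-- right-linearity: `(d, c) ∘ a = (d ∘ ã, c̃)`, with `ã`, `c̃` the pullbacks
  along the fibered product `Z ×_Y X` -/
  right_lin : ∀ {X Y Z : Type} [Finite X] [Finite Y] [Finite Z]
      (g : Z → Option Y) (f : X → Option Y) (d : data.A X)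
      (a : (y : Y) → data.A (pfib g y)) (c : (y : Y) → data.A (pfib f y)),
      data.mul g (data.contr f d c) a
        = data.contr (fpFst g f) (data.mul (fpSnd g f) d (data.atilde g f a))
            (data.ctilde g f c)
  /-- unit axiom: `a ∘ 1_{id_X} = a` -/
  mul_one_id : ∀ (X : Type) [Finite X] (a : data.A X),
      data.mul (fun x : X => some x) a (data.oneId X) = a
  /-- unit axiom: `1 ∘ a = a` -/
  one_lact : ∀ (X : Type) [Finite X] (a : data.A X), data.lact data.one a = a
  /-- unit axiom: `(a, 1_{id_X}) = a` -/
  contr_one_id : ∀ (X : Type) [Finite X] (a : data.A X),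
      data.contr (fun x : X => some x) a (data.oneId X) = a
  /-- unit axiom (1.8.11): `(a, 1_f) = f_A(a)` for a bijection `f = e` -/
  map_eq_contr : ∀ {X Y : Type} [Finite X] [Finite Y] (e : X ≃ Y) (a : data.A X),
      data.contr (fun x : X => some (e x)) a
        (fun y => data.map (equivFiberEquiv e y) data.one) = data.map e a
  /-- unit axiom (1.8.11): `a ∘ 1_{fᵗ} = f_A(a)` for a bijection `f = e` -/
  map_eq_mul : ∀ {X Y : Type} [Finite X] [Finite Y] (e : X ≃ Y) (a : data.A X),
      data.mul (fun y : Y => some (e.symm y)) a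
        (fun x => data.map (equivFiberEquiv e.symm x) data.one) = data.map e a
namespace GenRing

variable (R : GenRing)

/-- An `h`-ideal of a generalized ring: a subset `I ⊆ A_{[1]}` such that
`(b ∘ c, d) ∈ I` for all finite `X`, all `b, d ∈ A_X` and all `c ∈ I^X ⊆ (A_{[1]})^X`. -/
def IsHIdeal (I : Set (R.data.A (Fin 1))) : Prop :=
  ∀ (X : Type) [Finite X], ∀ (b d : R.data.A X) (c : X → R.data.A (Fin 1)),
    (∀ x, c x ∈ I) → R.data.pair (R.data.ract b c) d ∈ I

/-- A prime of a generalized ring: a proper `h`-ideal `P` whose complement is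
closed under the multiplication of `A_{[1]}`. -/
def IsPrimeH (P : Set (R.data.A (Fin 1))) : Prop :=
  R.IsHIdeal P ∧ R.data.one ∉ P ∧
    ∀ a b : R.data.A (Fin 1), R.data.op a b ∈ P → a ∈ P ∨ b ∈ P

end GenRing

/-- The spectrum of a generalized ring: the set of its primes. -/
structure SpecG (R : GenRing) where
  /-- the underlying prime `h`-ideal -/
  I : Set (R.data.A (Fin 1))
  /-- it is prime -/
  prime : R.IsPrimeH I

namespace GenRing

variable (R : GenRing)

/-- The basic open set `D_a = {𝔭 : a ∉ 𝔭}` of the Zariski topology. -/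
def basicOpen (a : R.data.A (Fin 1)) : Set (SpecG R) := {p | a ∉ p.I}

/-- The closed set `V(s) = {𝔭 : 𝔭 ⊇ s}` of the Zariski topology. -/
def zeroLocus (s : Set (R.data.A (Fin 1))) : Set (SpecG R) := {p | s ⊆ p.I}

/-- The Zariski topology on the spectrum, generated by the basic open sets. -/
instance : TopologicalSpace (SpecG R) :=
  TopologicalSpace.generateFrom {U | ∃ a : R.data.A (Fin 1), U = R.basicOpen a}

end GenRing

/-- A homomorphism of generalized rings: a (pointed, natural) family of maps
preserving multiplication, contraction and the unit. -/
structure GenRingHom (R S : GenRing) where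
  /-- the underlying family of maps -/
  app : (X : Type) → [inst : Finite X] → R.data.A X → S.data.A X
  /-- zero is preserved -/
  app_zero : ∀ (X : Type) [Finite X], app X (R.data.zero X) = S.data.zero X
  /-- the unit is preserved -/
  app_one : app (Fin 1) R.data.one = S.data.one
  /-- naturality with respect to bijections -/
  app_map : ∀ {X Y : Type} [Finite X] [Finite Y] (e : X ≃ Y) (a : R.data.A X),
      app Y (R.data.map e a) = S.data.map e (app X a)
  /-- multiplication is preserved -/
  app_mul : ∀ {X Y : Type} [Finite X] [Finite Y] (f : X → Option Y)
      (a : R.data.A Y) (b : (y : Y) → R.data.A (pfib f y)),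
      app X (R.data.mul f a b) = S.data.mul f (app Y a) (fun y => app (pfib f y) (b y))
  /-- contraction is preserved -/
  app_contr : ∀ {X Y : Type} [Finite X] [Finite Y] (f : X → Option Y)
      (a : R.data.A X) (b : (y : Y) → R.data.A (pfib f y)),
      app Y (R.data.contr f a b) = S.data.contr f (app X a) (fun y => app (pfib f y) (b y))

namespace GenRingHom

variable {R S : GenRing} (φ : GenRingHom R S)

theorem app_op (a b : R.data.A (Fin 1)) :
    φ.app (Fin 1) (R.data.op a b) = S.data.op (φ.app (Fin 1) a) (φ.app (Fin 1) b) := by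
  unfold GenRingData.op
  rw [φ.app_mul]
  congr 1
  funext z
  rw [φ.app_map]

theorem app_ract {X : Type} [Finite X] (b : R.data.A X) (c : X → R.data.A (Fin 1)) :
    φ.app X (R.data.ract b c) = S.data.ract (φ.app X b) (fun x => φ.app (Fin 1) (c x)) := by
  unfold GenRingData.ract
  rw [φ.app_mul]
  congr 1
  funext x
  rw [φ.app_map]

theorem app_pair {X : Type} [Finite X] (a d : R.data.A X) :
    φ.app (Fin 1) (R.data.pair a d) = S.data.pair (φ.app X a) (φ.app X d) := by
  unfold GenRingData.pair
  rw [φ.app_contr]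
  congr 1
  funext z
  rw [φ.app_map]

theorem app_lact {X : Type} [Finite X] (s : R.data.A (Fin 1)) (a : R.data.A X) :
    φ.app X (R.data.lact s a) = S.data.lact (φ.app (Fin 1) s) (φ.app X a) := by
  unfold GenRingData.lact
  rw [φ.app_mul]
  congr 1
  funext z
  rw [φ.app_map]

/-- The map `spec(φ) : spec(S) → spec(R)`, `𝔮 ↦ φ_{[1]}⁻¹(𝔮)`, induced by a
homomorphism of generalized rings `φ : R → S`. -/
def specMap (q : SpecG S) : SpecG R where
  I := φ.app (Fin 1) ⁻¹' q.I
  prime := by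
    refine ⟨?_, ?_, ?_⟩
    · intro X _ b d c hc
      show φ.app (Fin 1) (R.data.pair (R.data.ract b c) d) ∈ q.I
      rw [φ.app_pair, φ.app_ract]
      exact q.prime.1 X (φ.app X b) (φ.app X d) (fun x => φ.app (Fin 1) (c x)) hc
    · show φ.app (Fin 1) R.data.one ∉ q.I
      rw [φ.app_one]
      exact q.prime.2.1
    · intro a b hab
      have h : S.data.op (φ.app (Fin 1) a) (φ.app (Fin 1) b) ∈ q.I := by
        rw [← φ.app_op]; exact hab
      exact q.prime.2.2 _ _ h

end GenRingHom

/-- An equivalence ideal of a generalized ring: a family of equivalence relations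
on the sets `A_X` respecting the operations of multiplication and contraction. -/
structure EqvIdeal (R : GenRing) where
  /-- the family of relations -/
  rel : (X : Type) → [inst : Finite X] → R.data.A X → R.data.A X → Prop
  refl : ∀ (X : Type) [Finite X] (a : R.data.A X), rel X a a
  symm : ∀ (X : Type) [Finite X] {a b : R.data.A X}, rel X a b → rel X b a
  trans : ∀ (X : Type) [Finite X] {a b c : R.data.A X}, rel X a b → rel X b c → rel X a c
  /-- `a ∼ a'` implies `a ∘ b ∼ a' ∘ b` -/
  mul_left : ∀ {X Y : Type} [Finite X] [Finite Y] (f : X → Option Y) {a a' : R.data.A Y}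
      (b : (y : Y) → R.data.A (pfib f y)),
      rel Y a a' → rel X (R.data.mul f a b) (R.data.mul f a' b)
  /-- `b ∼ b'` (componentwise) implies `a ∘ b ∼ a ∘ b'` -/
  mul_right : ∀ {X Y : Type} [Finite X] [Finite Y] (f : X → Option Y) (a : R.data.A Y)
      {b b' : (y : Y) → R.data.A (pfib f y)},
      (∀ y, rel (pfib f y) (b y) (b' y)) → rel X (R.data.mul f a b) (R.data.mul f a b')
  /-- `a ∼ a'` implies `(a, b) ∼ (a', b)` -/
  contr_left : ∀ {X Y : Type} [Finite X] [Finite Y] (f : X → Option Y) {a a' : R.data.A X}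
      (b : (y : Y) → R.data.A (pfib f y)),
      rel X a a' → rel Y (R.data.contr f a b) (R.data.contr f a' b)
  /-- `b ∼ b'` (componentwise) implies `(a, b) ∼ (a, b')` -/
  contr_right : ∀ {X Y : Type} [Finite X] [Finite Y] (f : X → Option Y) (a : R.data.A X)
      {b b' : (y : Y) → R.data.A (pfib f y)},
      (∀ y, rel (pfib f y) (b y) (b' y)) → rel Y (R.data.contr f a b) (R.data.contr f a b')

namespace GenRing

variable (R : GenRing)

/-- The equivalence ideal `E(I)` generated by an (`h`-)ideal `I`: `a ∼ b` iff the
pair `(a, b)` belongs to every equivalence ideal containing `(i, 0)` for all `i ∈ I`. -/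
def erel (I : Set (R.data.A (Fin 1))) (X : Type) [Finite X] (a b : R.data.A X) : Prop :=
  ∀ ε : EqvIdeal R, (∀ i ∈ I, ε.rel (Fin 1) i (R.data.zero (Fin 1))) → ε.rel X a b

/-- A stable `h`-ideal: an `h`-ideal `I` such that for every pair `(a, b)` in the
equivalence ideal `E(I)` generated by `I` one has `a ∈ I ↔ b ∈ I`. -/
def IsStableHIdeal (I : Set (R.data.A (Fin 1))) : Prop :=
  R.IsHIdeal I ∧ ∀ a b : R.data.A (Fin 1), R.erel I (Fin 1) a b → (a ∈ I ↔ b ∈ I)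

/-- A multiplicative subset of `A_{[1]}`: contains `1`, closed under `∘`,
and stable under the involution. -/
def IsMulSet (S : Set (R.data.A (Fin 1))) : Prop :=
  R.data.one ∈ S ∧ (∀ a ∈ S, ∀ b ∈ S, R.data.op a b ∈ S) ∧
    (∀ a, a ∈ S ↔ R.data.adj a ∈ S)

/-- `φ : R → L` presents `L` as the localization `S⁻¹R` of `R` at the
multiplicative subset `S ⊆ A_{[1]}`: every element of `S` becomes invertible, every
element of `L` is a fraction `φ(a)/φ(s)`, and `φ(a) = φ(b)` iff `s ∘ a = s ∘ b`
for some `s ∈ S`. -/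
def IsLocalizationAt (S : Set (R.data.A (Fin 1))) {L : GenRing} (φ : GenRingHom R L) : Prop :=
  (∀ s ∈ S, ∃ t : L.data.A (Fin 1),
      L.data.op t (φ.app (Fin 1) s) = L.data.one ∧
      L.data.op (φ.app (Fin 1) s) t = L.data.one) ∧
  (∀ (X : Type) [Finite X], ∀ l : L.data.A X, ∃ (a : R.data.A X) (s : R.data.A (Fin 1)),
      s ∈ S ∧ L.data.lact (φ.app (Fin 1) s) l = φ.app X a) ∧
  (∀ (X : Type) [Finite X], ∀ a b : R.data.A X,
      φ.app X a = φ.app X b ↔ ∃ s ∈ S, R.data.lact s a = R.data.lact s b)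

end GenRing

/-- A section `g` of the structure sheaf over the basic open set `D_s`, with values
`g q ∈ (A_q)_X` in the localizations at the primes `q ∈ D_s`, is *locally a fraction*:
around every point of `D_s` there is an open set `U` on which `g` is constantly equal
to a fraction `a/t` with `a ∈ A_X` and `t ∈ A_{[1]}` avoiding all primes of `U`. -/
def LocallyFraction (R : GenRing) (s : R.data.A (Fin 1)) (Lp : SpecG R → GenRing)
    (φp : ∀ p : SpecG R, GenRingHom R (Lp p)) (X : Type) [Finite X]
    (g : (q : {p : SpecG R // p ∈ R.basicOpen s}) → (Lp q.1).data.A X) : Prop :=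
  ∀ q : {p : SpecG R // p ∈ R.basicOpen s}, ∃ U : Set (SpecG R),
    IsOpen U ∧ q.1 ∈ U ∧ U ⊆ R.basicOpen s ∧
      ∃ (a : R.data.A X) (t : R.data.A (Fin 1)), (∀ r ∈ U, t ∉ r.I) ∧
        ∀ r : {p : SpecG R // p ∈ R.basicOpen s}, r.1 ∈ U →
          (Lp r.1).data.lact ((φp r.1).app (Fin 1) t) (g r) = (φp r.1).app X a

/-!
Near each of its points, a section `g` over `D_s` that is locally a fraction is `aᵢ / vᵢ` on a
basic open `D_{vᵢ} ⊆ D_s`. The key input is a Nullstellensatz: if `D_s ⊆ ⋃_{e ∈ E} D_e`, then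
some `sⁿ` lies in the `h`-ideal generated by `E` (otherwise Zorn gives a prime containing `E` and
avoiding `s`; primality of a maximal such `h`-ideal uses that `A_{[1]}` is commutative, which is
where self-adjointness enters). It makes `D_s` quasi-compact, so finitely many `vᵢ` suffice, and
it turns "`m₁ = m₂` in every `A_𝔭` with `𝔭 ∈ D_u`" into `uⁿ ∘ m₁ = uⁿ ∘ m₂`. Replacing
`aᵢ / vᵢ` by `(vᵢᴺ ∘ aᵢ) / vᵢᴺ⁺¹` makes the fractions agree exactly, and then each `vᵢ ∘ g`
comes from `A_X` on all of `D_s`. Since `(b ∘ c, d) ∘ m` depends on `c` only through the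
`c_z ∘ m`, the denominators `x` for which `x ∘ g` comes from `A_X` form an `h`-ideal; it
contains the `vᵢ`, hence some `sⁿ`, so `g = A / sⁿ` is the image of an element of `A_s`.
Injectivity is the Nullstellensatz for the `h`-ideal `{σ | σ ∘ m₁ = σ ∘ m₂}`.
-/

def pfibEquivOfConst {W S : Type} (F : W → Option S) (s₀ : S) (h : ∀ w, F w = some s₀) :
    pfib F s₀ ≃ W where
  toFun q := q.1
  invFun w := ⟨w, h w⟩
  left_inv _ := rfl
  right_inv _ := rfl

theorem subsingleton_pfib {X Y : Type} (f : X → Option Y) (y : Y)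
    (h : ∀ a b, f a = some y → f b = some y → a = b) : Subsingleton (pfib f y) :=
  ⟨fun p q => Subtype.ext (h _ _ p.2 q.2)⟩

theorem resMap_eval {X Y Z : Type} (g : Y → Option Z) (f : X → Option Y) (z : Z)
    (q : pfib (pcomp g f) z) (y : Y) (hy : f q.1 = some y) (h : g y = some z) :
    resMap g f z q = some ⟨y, h⟩ := by
  unfold resMap
  rw [hy, Option.bind_some, dif_pos h]

theorem resMap_id {X Y : Type} (f : X → Option Y) (y : Y)
    (q : pfib (pcomp (fun y' : Y => some y') f) y) :
    resMap (fun y' : Y => some y') f y q = some ⟨y, rfl⟩ :=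
  resMap_eval _ _ y q y (by simpa [pcomp] using q.2) rfl

instance {Y : Type} (y : Y) : Subsingleton (pfib (fun y' : Y => some y') y) :=
  subsingleton_pfib _ _ fun _ _ ha hb => (Option.some.inj ha).trans (Option.some.inj hb).symm

theorem equiv_subtype_ext {α β : Type*} {p : β → Prop} {e₁ e₂ : α ≃ {b // p b}}
    (h : ∀ a, (e₁ a).1 = (e₂ a).1) : e₁ = e₂ :=
  Equiv.ext fun a => Subtype.ext (h a)

namespace GenRing

variable (R : GenRing)

theorem map_map {X Y Z : Type} [Finite X] [Finite Y] [Finite Z] (e : X ≃ Y) (e' : Y ≃ Z)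
    (a : R.data.A X) : R.data.map e' (R.data.map e a) = R.data.map (e.trans e') a :=
  (R.map_trans e e' a).symm

theorem map_congr {X Y : Type} [Finite X] [Finite Y] {e e' : X ≃ Y} (h : e = e')
    (a : R.data.A X) : R.data.map e a = R.data.map e' a := by rw [h]

theorem mul_graph_eq_map {T T' : Type} [Finite T] [Finite T'] (ee : T ≃ T')
    (F : T' → Option T) (hF : ∀ t', F t' = some (ee.symm t'))
    (a : R.data.A T) (B : (t : T) → R.data.A (pfib F t))
    (EE : (t : T) → Fin 1 ≃ pfib F t)
    (hEE : ∀ t z, ((EE t z : pfib F t) : T') = ee t)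
    (hB : ∀ t, B t = R.data.map (EE t) R.data.one) :
    R.data.mul F a B = R.data.map ee a := by
  have hF' : F = fun t' => some (ee.symm t') := funext hF
  subst hF'
  have hBB : B = fun t => R.data.map (equivFiberEquiv ee.symm t) R.data.one := by
    funext t
    rw [hB t]
    exact R.map_congr (equiv_subtype_ext (fun z => by
      show ((EE t z : _) : T') = ee.symm.symm t
      rw [Equiv.symm_symm]; exact hEE t z)) _
  rw [hBB]
  exact R.map_eq_mul ee a

theorem contr_graph_eq_map {T T' : Type} [Finite T] [Finite T'] (ee : T ≃ T')
    (G : T → Option T') (hG : ∀ t, G t = some (ee t))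
    (a : R.data.A T) (B : (t' : T') → R.data.A (pfib G t'))
    (EE : (t' : T') → Fin 1 ≃ pfib G t')
    (hEE : ∀ t' z, ((EE t' z : pfib G t') : T) = ee.symm t')
    (hB : ∀ t', B t' = R.data.map (EE t') R.data.one) :
    R.data.contr G a B = R.data.map ee a := by
  have hG' : G = fun t => some (ee t) := funext hG
  subst hG'
  have hBB : B = fun t' => R.data.map (equivFiberEquiv ee t') R.data.one := by
    funext t'
    rw [hB t']
    exact R.map_congr (equiv_subtype_ext (fun z => hEE t' z)) _
  rw [hBB]
  exact R.map_eq_contr ee a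

theorem mul_congr {X Y : Type} [Finite X] [Finite Y] (f f' : X → Option Y)
    (h : ∀ x, f x = f' x) (a : R.data.A Y)
    (B : (y : Y) → R.data.A (pfib f y)) (B' : (y : Y) → R.data.A (pfib f' y))
    (hB : ∀ (y : Y) (E : pfib f y ≃ pfib f' y),
      (∀ q : pfib f y, ((E q : pfib f' y) : X) = (q : X)) →
        R.data.map E (B y) = B' y) :
    R.data.mul f a B = R.data.mul f' a B' := by
  have h' : f = f' := funext h
  subst h'
  refine congrArg (R.data.mul f a) (funext fun y => ?_)
  have := hB y (Equiv.refl _) (fun q => rfl)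
  rwa [R.map_refl] at this

theorem contr_congr {X Y : Type} [Finite X] [Finite Y] (f f' : X → Option Y)
    (h : ∀ x, f x = f' x) (a : R.data.A X)
    (B : (y : Y) → R.data.A (pfib f y)) (B' : (y : Y) → R.data.A (pfib f' y))
    (hB : ∀ (y : Y) (E : pfib f y ≃ pfib f' y),
      (∀ q : pfib f y, ((E q : pfib f' y) : X) = (q : X)) →
        R.data.map E (B y) = B' y) :
    R.data.contr f a B = R.data.contr f' a B' := by
  have h' : f = f' := funext h
  subst h'
  refine congrArg (R.data.contr f a) (funext fun y => ?_)
  have := hB y (Equiv.refl _) (fun q => rfl)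
  rwa [R.map_refl] at this

theorem mul_const_eq_lact {W : Type} [Finite W] (F : W → Option (Fin 1))
    (hF : ∀ w, F w = some 0) (σ : R.data.A (Fin 1))
    (B : (z : Fin 1) → R.data.A (pfib F z))
    (E₀ : pfib F 0 ≃ W) (hE₀ : ∀ q, E₀ q = (q : W)) :
    R.data.mul F σ B = R.data.lact σ (R.data.map E₀ (B 0)) := by
  have hF' : F = fun _ => some 0 := funext hF
  subst hF'
  have hrhs : R.data.lact σ (R.data.map E₀ (B 0)) =
      R.data.mul (fun _ : W => some (0 : Fin 1)) σ
        (fun z => R.data.map (constFiberEquiv W z) (R.data.map E₀ (B 0))) := rfl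
  rw [hrhs]
  refine congrArg (R.data.mul _ σ) (funext fun z => ?_)
  have hz : (0 : Fin 1) = z := Subsingleton.elim _ _
  subst hz
  rw [R.map_map]
  refine ((R.map_congr ?_ (B 0)).trans (R.map_refl _ (B 0))).symm
  refine equiv_subtype_ext fun q => ?_
  show ((constFiberEquiv W 0) (E₀ q) : W) = (q : W)
  rw [hE₀ q]
  rfl

theorem atilde_eval {X Y Z : Type} [Finite X] [Finite Y] [Finite Z]
    (g : Z → Option Y) (f : X → Option Y) (a : (y : Y) → R.data.A (pfib g y))
    (x : X) (y : Y) (h : f x = some y) :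
    R.data.atilde g f a x = R.data.map (fpFiberSnd g f h) (a y) := by
  unfold GenRingData.atilde
  split
  · next y' hfx =>
      obtain rfl : y' = y := Option.some.inj (hfx.symm.trans h)
      rfl
  · next hfx => rw [hfx] at h; exact nomatch h

theorem ctilde_eval {X Y Z : Type} [Finite X] [Finite Y] [Finite Z]
    (g : Z → Option Y) (f : X → Option Y) (c : (y : Y) → R.data.A (pfib f y))
    (z : Z) (y : Y) (h : g z = some y) :
    R.data.ctilde g f c z = R.data.map (fpFiberFst g f h) (c y) := by
  unfold GenRingData.ctilde
  split
  · next y' hgz =>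
      obtain rfl : y' = y := Option.some.inj (hgz.symm.trans h)
      rfl
  · next hgz => rw [hgz] at h; exact nomatch h

theorem mul_reindex_source {X X' Y : Type} [Finite X] [Finite X'] [Finite Y]
    (eX : X ≃ X') (f : X → Option Y) (f' : X' → Option Y)
    (hf' : ∀ x', f' x' = f (eX.symm x'))
    (a : R.data.A Y) (b : (y : Y) → R.data.A (pfib f y))
    (E : (y : Y) → pfib f y ≃ pfib f' y)
    (hE : ∀ y q, ((E y q : pfib f' y) : X') = eX (q : X)) :
    R.data.mul f' a (fun y => R.data.map (E y) (b y)) = R.data.map eX (R.data.mul f a b) := by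
  have h1 : f' = fun x' => f (eX.symm x') := funext hf'
  subst h1
  rw [← R.map_eq_mul eX (R.data.mul f a b)]
  rw [← R.assoc f (fun x' : X' => some (eX.symm x')) a b
      (fun x => R.data.map (equivFiberEquiv eX.symm x) R.data.one)]
  refine congrArg (R.data.mul _ a) (funext fun y => ?_)
  show R.data.map (E y) (b y) = R.data.mul (resMap f (fun x' : X' => some (eX.symm x')) y)
    (b y) _
  refine (R.mul_graph_eq_map (E y) _ ?_ (b y) _
    (fun t => (equivFiberEquiv eX.symm (t : X)).trans
      (resFiberEquiv f (fun x' : X' => some (eX.symm x')) y t))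
    ?_ (fun t => R.map_map _ _ _)).symm
  · intro q
    show (Option.bind _ _) = _
    have hq : f (eX.symm (q : X')) = some y := q.2
    show (if h : f (eX.symm (q : X')) = some y
        then some (⟨eX.symm (q : X'), h⟩ : pfib f y) else none) = _
    rw [dif_pos hq]
    refine congrArg some (Subtype.ext ?_)
    have h2 := congrArg Subtype.val (Equiv.apply_symm_apply (E y) q)
    have h3 := hE y ((E y).symm q)
    show eX.symm (q : X') = (((E y).symm q : pfib f y) : X)
    rw [← h2, h3, Equiv.symm_apply_apply]
  · intro t z
    refine Subtype.ext ?_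
    show eX.symm.symm (t : X) = ((E y) t : X')
    rw [Equiv.symm_symm]
    exact (hE y t).symm

theorem map_lact {X X' : Type} [Finite X] [Finite X'] (e : X ≃ X') (σ : R.data.A (Fin 1))
    (x : R.data.A X) :
    R.data.map e (R.data.lact σ x) = R.data.lact σ (R.data.map e x) := by
  have h := R.mul_reindex_source e (fun _ : X => some (0:Fin 1)) (fun _ : X' => some (0:Fin 1))
      (fun _ => rfl) σ (fun z => R.data.map (constFiberEquiv X z) x)
      (fun z => (constFiberEquiv X z).symm.trans (e.trans (constFiberEquiv X' z)))
      (fun z q => rfl)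
  refine (h.symm).trans ?_
  refine (congrArg (R.data.mul (fun _ : X' => some (0:Fin 1)) σ) (funext fun z => ?_) :
    _ = R.data.mul _ σ fun z => R.data.map (constFiberEquiv X' z) (R.data.map e x))
  rw [R.map_map, R.map_map]
  exact R.map_congr (equiv_subtype_ext fun q => rfl) x

theorem mul_map_eq_lact {T S : Type} [Finite T] [Finite S] [Subsingleton S]
    (F : T → Option S) (s₀ : S) (hF : ∀ t, F t = some s₀)
    (eU : Fin 1 ≃ S) (σ : R.data.A (Fin 1))
    (B : (s : S) → R.data.A (pfib F s))
    (E₀ : pfib F s₀ ≃ T) (hE₀ : ∀ q, E₀ q = (q : T)) :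
    R.data.mul F (R.data.map eU σ) B = R.data.lact σ (R.data.map E₀ (B s₀)) := by
  have h0 : (fun z : Fin 1 => some (eU z)) 0 = some s₀ := congrArg some (Subsingleton.elim _ _)
  rw [← R.map_eq_contr eU σ]
  rw [R.right_lin F (fun z : Fin 1 => some (eU z)) σ B
      (fun y => R.data.map (equivFiberEquiv eU y) R.data.one)]
  have hF₂ : ∀ p : FP F (fun z : Fin 1 => some (eU z)),
      fpSnd F (fun z : Fin 1 => some (eU z)) p = some 0 :=
    fun p => congrArg some (Subsingleton.elim _ _)
  rw [R.mul_const_eq_lact (fpSnd F (fun z : Fin 1 => some (eU z))) hF₂ σ _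
      (pfibEquivOfConst _ 0 hF₂) (fun q => rfl)]
  rw [R.atilde_eval F (fun z : Fin 1 => some (eU z)) B 0 s₀ h0]
  rw [R.map_map]
  rw [R.contr_graph_eq_map
      ({ toFun := fun p => p.1.1
         invFun := fun t => ⟨(t, 0), ⟨s₀, hF t, h0⟩⟩
         left_inv := fun p => Subtype.ext (Prod.ext rfl (Subsingleton.elim _ _))
         right_inv := fun t => rfl } : FP F (fun z : Fin 1 => some (eU z)) ≃ T)
      (fpFst F (fun z : Fin 1 => some (eU z))) (fun p => rfl) _ _
      (fun t => (equivFiberEquiv eU s₀).trans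
        (fpFiberFst F (fun z : Fin 1 => some (eU z)) (hF t)))
      (fun t z => Subtype.ext (Prod.ext rfl (Subsingleton.elim _ _)))
      (fun t => by
        rw [R.ctilde_eval F (fun z : Fin 1 => some (eU z)) _ t s₀ (hF t), R.map_map])]
  rw [R.map_lact, R.map_map]
  refine congrArg (R.data.lact σ) (R.map_congr (Equiv.ext fun q => ?_) (B s₀))
  rw [hE₀ q]
  rfl

theorem contr_const_eq_map_pair {T S : Type} [Finite T] [Finite S] [Subsingleton S]
    (F : T → Option S) (s₀ : S) (hF : ∀ t, F t = some s₀)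
    (eU : Fin 1 ≃ S) (u : R.data.A T)
    (B : (s : S) → R.data.A (pfib F s))
    (E₀ : pfib F s₀ ≃ T) (hE₀ : ∀ q, E₀ q = (q : T)) :
    R.data.contr F u B = R.data.map eU (R.data.pair u (R.data.map E₀ (B s₀))) := by
  have h0 : (fun z : Fin 1 => some (eU z)) 0 = some s₀ := congrArg some (Subsingleton.elim _ _)
  rw [← R.map_eq_contr eU (R.data.pair u (R.data.map E₀ (B s₀)))]
  have hpair : R.data.pair u (R.data.map E₀ (B s₀)) =
      R.data.contr (fun _ : T => some (0:Fin 1)) u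
        (fun z => R.data.map (constFiberEquiv T z) (R.data.map E₀ (B s₀))) := rfl
  rw [hpair]
  rw [← R.left_adj (fun z : Fin 1 => some (eU z)) (fun _ : T => some (0 : Fin 1)) u
      (fun y => R.data.map (equivFiberEquiv eU y) R.data.one)
      (fun z => R.data.map (constFiberEquiv T z) (R.data.map E₀ (B s₀)))]
  refine R.contr_congr _ _ (fun t => (hF t).trans (congrArg some (Subsingleton.elim _ _))) u B _
    (fun s E hE => ?_)
  have hs : s₀ = s := Subsingleton.elim _ _
  subst hs
  have : Subsingleton (pfib (fun z : Fin 1 => some (eU z)) s₀) :=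
    subsingleton_pfib _ _ (fun a b ha hb => eU.injective (Option.some.inj (ha.trans hb.symm)))
  have hF' : ∀ q : pfib (pcomp (fun z : Fin 1 => some (eU z)) (fun _ : T => some (0:Fin 1))) s₀,
      resMap (fun z : Fin 1 => some (eU z)) (fun _ : T => some (0:Fin 1)) s₀ q
        = some (⟨0, h0⟩ : pfib (fun z : Fin 1 => some (eU z)) s₀) := by
    intro q
    show (if h : (fun z : Fin 1 => some (eU z)) 0 = some s₀
        then some (⟨0, h⟩ : pfib (fun z : Fin 1 => some (eU z)) s₀) else none) = _
    rw [dif_pos h0]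
  have hcomp := R.mul_map_eq_lact
      (resMap (fun z : Fin 1 => some (eU z)) (fun _ : T => some (0:Fin 1)) s₀)
      (⟨0, h0⟩ : pfib (fun z : Fin 1 => some (eU z)) s₀) hF'
      (equivFiberEquiv eU s₀) R.data.one
      (fun p => R.data.map (resFiberEquiv (fun z : Fin 1 => some (eU z))
          (fun _ : T => some (0:Fin 1)) s₀ p)
        ((fun z => R.data.map (constFiberEquiv T z) (R.data.map E₀ (B s₀))) (p : Fin 1)))
      (pfibEquivOfConst _ _ hF') (fun q => rfl)
  have hstep : R.data.map E (B s₀)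
      = R.data.lact R.data.one (R.data.map (pfibEquivOfConst _ _ hF')
          (R.data.map (resFiberEquiv (fun z : Fin 1 => some (eU z))
            (fun _ : T => some (0:Fin 1)) s₀ ⟨0, h0⟩)
          (R.data.map (constFiberEquiv T 0) (R.data.map E₀ (B s₀))))) := by
        rw [R.one_lact, R.map_map, R.map_map, R.map_map]
        exact R.map_congr (Equiv.ext fun q => Subtype.ext ((hE q).trans (hE₀ q).symm)) (B s₀)
  exact hstep.trans hcomp.symm

theorem contr_reindex_source {X X' Y : Type} [Finite X] [Finite X'] [Finite Y]
    (eX : X ≃ X') (f : X → Option Y) (f' : X' → Option Y)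
    (hf' : ∀ x', f' x' = f (eX.symm x'))
    (a : R.data.A X) (b : (y : Y) → R.data.A (pfib f y))
    (E : (y : Y) → pfib f y ≃ pfib f' y)
    (hE : ∀ y q, ((E y q : pfib f' y) : X') = eX (q : X)) :
    R.data.contr f' (R.data.map eX a) (fun y => R.data.map (E y) (b y))
      = R.data.contr f a b := by
  have h1 : f' = fun x' => f (eX.symm x') := funext hf'
  subst h1
  have hinner : R.data.contr (fun x' : X' => some (eX.symm x')) (R.data.map eX a)
      (fun x => R.data.map (equivFiberEquiv eX.symm x) R.data.one) = a := by
    rw [R.contr_graph_eq_map eX.symm (fun x' : X' => some (eX.symm x')) (fun _ => rfl)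
      (R.data.map eX a) _ (fun x => equivFiberEquiv eX.symm x) (fun x z => rfl)
      (fun x => rfl)]
    rw [R.map_map]
    exact (R.map_congr (Equiv.self_trans_symm eX) a).trans (R.map_refl _ a)
  have h := R.left_adj f (fun x' : X' => some (eX.symm x')) (R.data.map eX a) b
      (fun x => R.data.map (equivFiberEquiv eX.symm x) R.data.one)
  rw [hinner] at h
  refine Eq.trans ?_ h
  refine congrArg (R.data.contr _ (R.data.map eX a)) (funext fun y => ?_)
  refine (R.mul_graph_eq_map (E y) _ ?_ (b y) _
    (fun t => (equivFiberEquiv eX.symm (t : X)).trans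
      (resFiberEquiv f (fun x' : X' => some (eX.symm x')) y t))
    ?_ (fun t => R.map_map _ _ _)).symm
  · intro q
    have hq : f (eX.symm (q : X')) = some y := q.2
    show (if h : f (eX.symm (q : X')) = some y
        then some (⟨eX.symm (q : X'), h⟩ : pfib f y) else none) = _
    rw [dif_pos hq]
    refine congrArg some (Subtype.ext ?_)
    have h2 := congrArg Subtype.val (Equiv.apply_symm_apply (E y) q)
    have h3 := hE y ((E y).symm q)
    show eX.symm (q : X') = (((E y).symm q : pfib f y) : X)
    rw [← h2, h3, Equiv.symm_apply_apply]
  · intro t z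
    refine Subtype.ext ?_
    show eX.symm.symm (t : X) = ((E y) t : X')
    rw [Equiv.symm_symm]
    exact (hE y t).symm

theorem pair_reindex {X X' : Type} [Finite X] [Finite X'] (e : X ≃ X')
    (u w : R.data.A X) :
    R.data.pair (R.data.map e u) (R.data.map e w) = R.data.pair u w := by
  have h := R.contr_reindex_source e (fun _ : X => some (0:Fin 1)) (fun _ : X' => some (0:Fin 1))
      (fun _ => rfl) u (fun z => R.data.map (constFiberEquiv X z) w)
      (fun z => (constFiberEquiv X z).symm.trans (e.trans (constFiberEquiv X' z)))
      (fun z q => rfl)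
  refine Eq.trans ?_ h
  refine (congrArg (R.data.contr (fun _ : X' => some (0:Fin 1)) (R.data.map e u))
    (funext fun z => ?_) : _ = _)
  rw [R.map_map, R.map_map]
  exact (R.map_congr (equiv_subtype_ext fun q => rfl) w).symm

theorem op_eq_lact (σ y : R.data.A (Fin 1)) : R.data.op σ y = R.data.lact σ y := by
  have hF : ∀ z : Fin 1, (fun z' : Fin 1 => some z') z = some 0 :=
    fun z => congrArg some (Subsingleton.elim _ _)
  have h := R.mul_const_eq_lact (fun z : Fin 1 => some z) hF σ
      (fun z => R.data.map (idFiberEquiv z) y) (pfibEquivOfConst _ 0 hF) (fun q => rfl)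
  refine h.trans ?_
  refine congrArg (R.data.lact σ) ?_
  rw [R.map_map]
  exact (R.map_congr (Subsingleton.elim _ _) y).trans (R.map_refl _ y)

theorem op_one (a : R.data.A (Fin 1)) : R.data.op a R.data.one = a := R.mul_one_id _ a

theorem one_op (a : R.data.A (Fin 1)) : R.data.op R.data.one a = a := by
  rw [R.op_eq_lact, R.one_lact]

theorem lact_lact {M : Type} [Finite M] (σ τ : R.data.A (Fin 1)) (m : R.data.A M) :
    R.data.lact (R.data.op σ τ) m = R.data.lact σ (R.data.lact τ m) := by
  have h := R.assoc (fun z : Fin 1 => some z) (fun _ : M => some (0:Fin 1)) σ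
      (fun z => R.data.map (idFiberEquiv z) τ) (fun z => R.data.map (constFiberEquiv M z) m)
  refine h.symm.trans ?_
  refine R.mul_congr _ _ (fun x => rfl) σ _ _ (fun z E hE => ?_)
  have hF' := resMap_id (fun _ : M => some (0:Fin 1)) z
  have hcomp := R.mul_map_eq_lact
      (resMap (fun z' : Fin 1 => some z') (fun _ : M => some (0:Fin 1)) z)
      (⟨z, rfl⟩ : pfib (fun z' : Fin 1 => some z') z) hF' (idFiberEquiv z) τ
      (fun p => R.data.map (resFiberEquiv (fun z' : Fin 1 => some z')
          (fun _ : M => some (0:Fin 1)) z p)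
        (R.data.map (constFiberEquiv M (p : Fin 1)) m))
      (pfibEquivOfConst _ _ hF') (fun q => rfl)
  refine Eq.trans (congrArg (R.data.map E) hcomp) ?_
  rw [R.map_lact]
  have hml : R.data.map (constFiberEquiv M z) (R.data.lact τ m)
      = R.data.lact τ (R.data.map (constFiberEquiv M z) m) := R.map_lact _ τ m
  rw [hml]
  refine congrArg (R.data.lact τ) ?_
  beta_reduce
  simp only [R.map_map]
  exact congrArg (fun ee => R.data.map ee m) (equiv_subtype_ext fun q => hE _)

theorem op_assoc (a b c : R.data.A (Fin 1)) :
    R.data.op (R.data.op a b) c = R.data.op a (R.data.op b c) := by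
  rw [R.op_eq_lact (R.data.op a b) c, R.lact_lact, R.op_eq_lact a (R.data.op b c),
    R.op_eq_lact b c]

theorem contr_id_eq_pair (u v : R.data.A (Fin 1)) :
    R.data.contr (fun z : Fin 1 => some z) u (fun z => R.data.map (idFiberEquiv z) v)
      = R.data.pair u v := by
  refine R.contr_congr _ _ (fun x => congrArg some (Subsingleton.elim _ _)) u _ _
    (fun z E hE => ?_)
  rw [R.map_map]
  exact R.map_congr (equiv_subtype_ext fun q => Subsingleton.elim _ _) v

theorem pair_one (v : R.data.A (Fin 1)) : R.data.pair v R.data.one = v := by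
  have h := R.contr_graph_eq_map (Equiv.refl (Fin 1)) (fun _ : Fin 1 => some (0:Fin 1))
      (fun t => congrArg some (Subsingleton.elim _ _)) v
      (fun z => R.data.map (constFiberEquiv (Fin 1) z) R.data.one)
      (fun z => constFiberEquiv (Fin 1) z) (fun t z => Subsingleton.elim _ _)
      (fun t => rfl)
  exact h.trans (R.map_refl _ v)

theorem adj_op (a b : R.data.A (Fin 1)) :
    R.data.adj (R.data.op a b) = R.data.pair (R.data.adj b) a := by
  have h := R.left_adj (fun z : Fin 1 => some z) (fun z : Fin 1 => some z) R.data.one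
      (fun z => R.data.map (idFiberEquiv z) a) (fun z => R.data.map (idFiberEquiv z) b)
  rw [R.contr_id_eq_pair R.data.one b] at h
  rw [R.contr_id_eq_pair _ a] at h
  refine Eq.trans ?_ h
  show R.data.pair R.data.one (R.data.op a b) = _
  refine (R.contr_congr _ _ (fun x => congrArg some (Subsingleton.elim _ _)) R.data.one _ _
    (fun z E hE => ?_)).symm
  have hF' := resMap_id (fun z' : Fin 1 => some z') z
  have hcomp := R.mul_map_eq_lact
      (resMap (fun z' : Fin 1 => some z') (fun z' : Fin 1 => some z') z)
      (⟨z, rfl⟩ : pfib (fun z' : Fin 1 => some z') z) hF' (idFiberEquiv z) a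
      (fun p => R.data.map (resFiberEquiv (fun z' : Fin 1 => some z')
          (fun z' : Fin 1 => some z') z p)
        (R.data.map (idFiberEquiv (p : Fin 1)) b))
      (pfibEquivOfConst _ _ hF') (fun q => rfl)
  refine Eq.trans (congrArg (R.data.map E) hcomp) ?_
  refine (R.map_lact _ _ _).trans ?_
  have hml : R.data.map (constFiberEquiv (Fin 1) z) (R.data.op a b)
      = R.data.lact a (R.data.map (constFiberEquiv (Fin 1) z) b) := by
    rw [R.op_eq_lact, R.map_lact]
  rw [hml]
  refine congrArg (R.data.lact a) ?_
  rw [R.map_map, R.map_map]; refine (R.map_map _ _ _).trans ?_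
  exact R.map_congr (equiv_subtype_ext fun q => Subsingleton.elim _ _) b

theorem pair_swap (a c : R.data.A (Fin 1)) :
    R.data.pair c a = R.data.adj (R.data.pair a c) := by
  have h := R.right_adj (fun z : Fin 1 => some z) (fun z : Fin 1 => some z) R.data.one
      (fun z => R.data.map (idFiberEquiv z) a) (fun z => R.data.map (idFiberEquiv z) c)
  have h1 : R.data.mul (fun z : Fin 1 => some z) R.data.one
      (fun z => R.data.map (idFiberEquiv z) c) = c := R.one_op c
  rw [h1] at h
  refine Eq.trans ?_ (h.trans ?_)
  · refine (R.contr_congr _ _ (fun x => congrArg some (Subsingleton.elim _ _)) c _ _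
      (fun z E hE => ?_)).symm
    refine (R.map_map _ _ _).trans ?_
    exact R.map_congr (equiv_subtype_ext fun q => Subsingleton.elim _ _) a
  · refine Eq.trans ?_ (R.contr_id_eq_pair R.data.one (R.data.pair a c))
    refine congrArg (R.data.contr _ R.data.one) (funext fun z => ?_)
    have hF' := resMap_id (fun z' : Fin 1 => some z') z
    have hcomp := R.contr_const_eq_map_pair
        (resMap (fun z' : Fin 1 => some z') (fun z' : Fin 1 => some z') z)
        (⟨z, rfl⟩ : pfib (fun z' : Fin 1 => some z') z) hF' (idFiberEquiv z)
        (R.data.map (idFiberEquiv z) a)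
        (fun p => R.data.map (resFiberEquiv (fun z' : Fin 1 => some z')
            (fun z' : Fin 1 => some z') z p)
          (R.data.map (idFiberEquiv (p : Fin 1)) c))
        (pfibEquivOfConst _ _ hF') (fun q => rfl)
    refine Eq.trans hcomp ?_
    refine congrArg (R.data.map (idFiberEquiv z)) ?_
    rw [R.map_map, R.map_map]
    have hc : R.data.map ((idFiberEquiv z).trans
        ((resFiberEquiv (fun z' : Fin 1 => some z') (fun z' : Fin 1 => some z') z
          ⟨z, rfl⟩).trans (pfibEquivOfConst _ _ hF'))) c
        = R.data.map (idFiberEquiv z) c :=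
      R.map_congr (Subsingleton.elim _ _) c
    rw [hc]
    exact R.pair_reindex (idFiberEquiv z) a c

def SelfAdjoint : Prop := ∀ x : R.data.A (Fin 1), R.data.adj x = x

/-- `a ∘ b = (a ∘ b)ᵗ = (bᵗ, a) = (b, a)`, and `(b, a) = (a, b)ᵗ = (a, b)`. -/
theorem op_comm (hsa : R.SelfAdjoint) (a b : R.data.A (Fin 1)) :
    R.data.op a b = R.data.op b a := by
  have h1 : ∀ x y : R.data.A (Fin 1), R.data.op x y = R.data.pair y x := fun x y => by
    rw [← hsa (R.data.op x y), R.adj_op, hsa _]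
  rw [h1 a b, h1 b a, R.pair_swap, hsa _]

theorem lact_cancel_of_op_eq_one {X : Type} [Finite X] (t u : R.data.A (Fin 1))
    (h : R.data.op t u = R.data.one)
    (x y : R.data.A X) (hxy : R.data.lact u x = R.data.lact u y) : x = y := by
  have key : ∀ w : R.data.A X, w = R.data.lact t (R.data.lact u w) := fun w => by
    rw [← R.lact_lact, h, R.one_lact]
  rw [key x, key y, hxy]

theorem opPow_succ (a : R.data.A (Fin 1)) (n : ℕ) :
    R.data.opPow a (n+1) = R.data.op a (R.data.opPow a n) := rfl

theorem opPow_add (a : R.data.A (Fin 1)) (n m : ℕ) :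
    R.data.opPow a (n + m) = R.data.op (R.data.opPow a n) (R.data.opPow a m) := by
  induction n with
  | zero => simp only [Nat.zero_add]; exact (R.one_op _).symm
  | succ n ih =>
      rw [Nat.succ_add, R.opPow_succ, R.opPow_succ, ih, R.op_assoc]

theorem opPow_op (hsa : R.SelfAdjoint) (a b : R.data.A (Fin 1)) (n : ℕ) :
    R.data.opPow (R.data.op a b) n = R.data.op (R.data.opPow a n) (R.data.opPow b n) := by
  induction n with
  | zero => exact (R.one_op _).symm
  | succ n ih =>
      rw [R.opPow_succ, R.opPow_succ, R.opPow_succ, ih]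
      rw [R.op_assoc a b _, ← R.op_assoc b (R.data.opPow a n) _,
        R.op_comm hsa b (R.data.opPow a n), R.op_assoc (R.data.opPow a n) b _,
        ← R.op_assoc a (R.data.opPow a n) _]

theorem opPow_succ_op_opPow (hsa : R.SelfAdjoint) (u v : R.data.A (Fin 1)) (n : ℕ) :
    R.data.op (R.data.opPow v (n+1)) (R.data.opPow u n)
      = R.data.op (R.data.opPow (R.data.op u v) n) v := by
  rw [R.opPow_succ, R.op_assoc, R.opPow_op hsa,
    R.op_comm hsa (R.data.opPow v n) (R.data.opPow u n),
    R.op_comm hsa v (R.data.op (R.data.opPow u n) (R.data.opPow v n))]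

end GenRing
def fpSndConstFiberEquiv (M Z : Type) (z : Z) :
    M ≃ pfib (fpSnd (fun _ : M => some (0:Fin 1)) (fun _ : Z => some (0:Fin 1))) z where
  toFun m₀ := ⟨⟨(m₀, z), ⟨0, rfl, rfl⟩⟩, rfl⟩
  invFun q := q.1.1.1
  left_inv _ := rfl
  right_inv q := Subtype.ext (Subtype.ext (Prod.ext rfl (Option.some.inj q.2).symm))

def fpFstConstFiberEquiv (M Z : Type) (m' : M) :
    Z ≃ pfib (fpFst (fun _ : M => some (0:Fin 1)) (fun _ : Z => some (0:Fin 1))) m' where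
  toFun z₀ := ⟨⟨(m', z₀), ⟨0, rfl, rfl⟩⟩, rfl⟩
  invFun q := q.1.1.2
  left_inv _ := rfl
  right_inv q := Subtype.ext (Subtype.ext (Prod.ext (Option.some.inj q.2).symm rfl))

def fpConstEquiv (Z : Type) :
    Z ≃ FP (fun _ : Fin 1 => some (0:Fin 1)) (fun _ : Z => some (0:Fin 1)) where
  toFun z₀ := ⟨(0, z₀), ⟨0, rfl, rfl⟩⟩
  invFun p := p.1.2
  left_inv _ := rfl
  right_inv _ := Subtype.ext (Prod.ext (Subsingleton.elim _ _) rfl)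

/-- For `b, d ∈ A_Z` and a family `m : Z → A_M`, the element `(b ∘ m, d) ∈ A_M`, formed over
`M × Z = M ×_{[1]} Z`. -/
def GenRingData.fpPair (R : GenRingData) {M Z : Type} [Finite M] [Finite Z]
    (b : R.A Z) (m : Z → R.A M) (d : R.A Z) : R.A M :=
  R.contr (fpFst (fun _ : M => some (0:Fin 1)) (fun _ : Z => some (0:Fin 1)))
    (R.mul (fpSnd (fun _ : M => some (0:Fin 1)) (fun _ : Z => some (0:Fin 1))) b
      (fun z => R.map (fpSndConstFiberEquiv M Z z) (m z)))
    (fun m' => R.map (fpFstConstFiberEquiv M Z m') d)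

theorem GenRingHom.app_fpPair {R S : GenRing} (φ : GenRingHom R S) {M Z : Type} [Finite M]
    [Finite Z] (b : R.data.A Z) (m : Z → R.data.A M) (d : R.data.A Z) :
    φ.app M (R.data.fpPair b m d)
      = S.data.fpPair (φ.app Z b) (fun z => φ.app M (m z)) (φ.app Z d) := by
  unfold GenRingData.fpPair
  rw [φ.app_contr, φ.app_mul]
  simp only [φ.app_map]

namespace GenRing

variable (R : GenRing)

theorem mul_fpSnd_ract {M Z : Type} [Finite M] [Finite Z]
    (b : R.data.A Z) (c : Z → R.data.A (Fin 1)) (m : R.data.A M) :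
    R.data.mul (fpSnd (fun _ : M => some (0:Fin 1)) (fun _ : Z => some (0:Fin 1)))
      (R.data.ract b c)
      (R.data.atilde (fun _ : M => some (0:Fin 1)) (fun _ : Z => some (0:Fin 1))
        (fun y => R.data.map (constFiberEquiv M y) m))
      = R.data.mul (fpSnd (fun _ : M => some (0:Fin 1)) (fun _ : Z => some (0:Fin 1))) b
          (fun z => R.data.map (fpSndConstFiberEquiv M Z z) (R.data.lact (c z) m)) := by
  refine (R.assoc (fun z : Z => some z)
      (fpSnd (fun _ : M => some (0:Fin 1)) (fun _ : Z => some (0:Fin 1))) b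
      (fun z => R.data.map (idFiberEquiv z) (c z)) _).symm.trans ?_
  refine R.mul_congr _ _ (fun p => rfl) b _ _ (fun z E hE => ?_)
  have hF' := resMap_id (fpSnd (fun _ : M => some (0:Fin 1)) (fun _ : Z => some (0:Fin 1))) z
  have hcomp := R.mul_map_eq_lact
      (resMap (fun z' : Z => some z')
        (fpSnd (fun _ : M => some (0:Fin 1)) (fun _ : Z => some (0:Fin 1))) z)
      (⟨z, rfl⟩ : pfib (fun z' : Z => some z') z) hF' (idFiberEquiv z) (c z)
      (fun p => R.data.map (resFiberEquiv (fun z' : Z => some z')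
          (fpSnd (fun _ : M => some (0:Fin 1)) (fun _ : Z => some (0:Fin 1))) z p)
        (R.data.map (fpFiberSnd (fun _ : M => some (0:Fin 1)) (fun _ : Z => some (0:Fin 1))
            (show (fun _ : Z => some (0:Fin 1)) (p : Z) = some 0 from rfl))
          (R.data.map (constFiberEquiv M 0) m)))
      (pfibEquivOfConst _ _ hF') (fun q => rfl)
  refine Eq.trans (congrArg (R.data.map E) hcomp) ?_
  rw [R.map_lact, R.map_lact]
  refine congrArg (R.data.lact (c z)) ?_
  beta_reduce
  simp only [R.map_map]
  exact congrArg (fun ee => R.data.map ee m) (equiv_subtype_ext fun q => hE _)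

theorem ctilde_const {M Z : Type} [Finite M] [Finite Z] (d : R.data.A Z) :
    R.data.ctilde (fun _ : M => some (0:Fin 1)) (fun _ : Z => some (0:Fin 1))
      (fun y => R.data.map (constFiberEquiv Z y) d)
      = fun m' => R.data.map (fpFstConstFiberEquiv M Z m') d := by
  funext m'
  rw [R.ctilde_eval (fun _ : M => some (0:Fin 1)) (fun _ : Z => some (0:Fin 1)) _ m' 0 rfl,
    R.map_map]
  exact congrArg (fun ee => R.data.map ee d) (equiv_subtype_ext fun z₀ => rfl)

theorem lact_pair_ract {M Z : Type} [Finite M] [Finite Z]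
    (b : R.data.A Z) (c : Z → R.data.A (Fin 1)) (d : R.data.A Z) (m : R.data.A M) :
    R.data.lact (R.data.pair (R.data.ract b c) d) m
      = R.data.fpPair b (fun z => R.data.lact (c z) m) d := by
  refine (R.right_lin (fun _ : M => some (0:Fin 1)) (fun _ : Z => some (0:Fin 1))
    (R.data.ract b c) (fun y => R.data.map (constFiberEquiv M y) m)
    (fun y => R.data.map (constFiberEquiv Z y) d)).trans ?_
  rw [mul_fpSnd_ract, ctilde_const]
  rfl

theorem op_pair_ract {Z : Type} [Finite Z]
    (b : R.data.A Z) (c : Z → R.data.A (Fin 1)) (d : R.data.A Z) (y : R.data.A (Fin 1)) :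
    R.data.op (R.data.pair (R.data.ract b c) d) y
      = R.data.pair (R.data.ract b (fun z => R.data.op (c z) y)) d := by
  rw [R.op_eq_lact, R.lact_pair_ract]
  simp only [← R.op_eq_lact]
  unfold GenRingData.fpPair
  have hV : R.data.mul (fpSnd (fun _ : Fin 1 => some (0:Fin 1)) (fun _ : Z => some (0:Fin 1))) b
      (fun z => R.data.map (fpSndConstFiberEquiv (Fin 1) Z z) (R.data.op (c z) y))
      = R.data.map (fpConstEquiv Z) (R.data.ract b (fun z => R.data.op (c z) y)) := by
    have h := R.mul_reindex_source (fpConstEquiv Z) (fun z : Z => some z)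
        (fpSnd (fun _ : Fin 1 => some (0:Fin 1)) (fun _ : Z => some (0:Fin 1)))
        (fun _ => rfl) b (fun z => R.data.map (idFiberEquiv z) (R.data.op (c z) y))
        (fun z => (idFiberEquiv z).symm.trans (fpSndConstFiberEquiv (Fin 1) Z z))
        (fun z q => Subtype.ext (Prod.ext rfl (Option.some.inj q.2).symm))
    refine Eq.trans ?_ h
    refine congrArg (R.data.mul _ b) (funext fun z => ?_)
    rw [R.map_map]
    exact congrArg (fun ee => R.data.map ee (R.data.op (c z) y))
      (equiv_subtype_ext fun m₀ => Subtype.ext (Prod.ext (Subsingleton.elim _ _) rfl))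
  rw [hV]
  have hd : R.data.contr (fpFst (fun _ : Fin 1 => some (0:Fin 1)) (fun _ : Z => some (0:Fin 1)))
      (R.data.map (fpConstEquiv Z) (R.data.ract b (fun z => R.data.op (c z) y)))
      (fun m' => R.data.map (fpFstConstFiberEquiv (Fin 1) Z m') d)
      = R.data.pair (R.data.map (fpConstEquiv Z) (R.data.ract b (fun z => R.data.op (c z) y)))
          (R.data.map (fpConstEquiv Z) d) := by
    refine R.contr_congr _ _ (fun p => congrArg some (Subsingleton.elim _ _)) _ _ _
      (fun m' E hE => ?_)
    rw [R.map_map]; refine (R.map_map _ _ _).trans ?_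
    exact congrArg (fun ee => R.data.map ee d)
      (equiv_subtype_ext fun z₀ =>
        (hE _).trans (Subtype.ext (Prod.ext (Subsingleton.elim _ _) rfl)))
  rw [hd]
  exact R.pair_reindex (fpConstEquiv Z) _ d

theorem op_mem_of_right_mem {I : Set (R.data.A (Fin 1))} (hI : R.IsHIdeal I)
    {u : R.data.A (Fin 1)} (hu : u ∈ I) (w : R.data.A (Fin 1)) : R.data.op w u ∈ I := by
  have h := hI (Fin 1) w R.data.one (fun _ => u) (fun _ => hu)
  rwa [R.pair_one] at h

theorem op_mem_of_left_mem (hsa : R.SelfAdjoint) {I : Set (R.data.A (Fin 1))}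
    (hI : R.IsHIdeal I) {u : R.data.A (Fin 1)} (hu : u ∈ I) (w : R.data.A (Fin 1)) :
    R.data.op u w ∈ I := by
  rw [R.op_comm hsa]
  exact R.op_mem_of_right_mem hI hu w

theorem isHIdeal_setOf_lact_eq {X : Type} [Finite X] (m₁ m₂ : R.data.A X) :
    R.IsHIdeal {σ | R.data.lact σ m₁ = R.data.lact σ m₂} := by
  intro Z _ b d c hc
  show R.data.lact _ m₁ = R.data.lact _ m₂
  rw [R.lact_pair_ract, R.lact_pair_ract]
  exact congrArg (R.data.fpPair b · d) (funext hc)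

theorem isHIdeal_setOf_exists_lact_eq {ι : Type*} {L : ι → GenRing}
    (φ : ∀ i, GenRingHom R (L i)) {X : Type} [Finite X] (g : ∀ i, (L i).data.A X) :
    R.IsHIdeal {x | ∃ a : R.data.A X, ∀ i,
      (L i).data.lact ((φ i).app (Fin 1) x) (g i) = (φ i).app X a} := by
  intro Z _ b d c hc
  choose a ha using hc
  refine ⟨R.data.fpPair b a d, fun i => ?_⟩
  rw [(φ i).app_pair, (φ i).app_ract, (L i).lact_pair_ract, (φ i).app_fpPair]
  exact congrArg ((L i).data.fpPair _ · _) (funext fun z => ha z i)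

end GenRing

namespace GenRing

inductive MemHSpan (R : GenRing) (E : Set (R.data.A (Fin 1))) : R.data.A (Fin 1) → Prop
  | of_mem {x} : x ∈ E → MemHSpan R E x
  | pair_ract (X : Type) [Finite X] (b d : R.data.A X) (c : X → R.data.A (Fin 1)) :
      (∀ x, MemHSpan R E (c x)) → MemHSpan R E (R.data.pair (R.data.ract b c) d)

variable {R : GenRing}

theorem isHIdeal_setOf_memHSpan (E : Set (R.data.A (Fin 1))) :
    R.IsHIdeal {x | MemHSpan R E x} := fun X _ b d c hc => .pair_ract X b d c hc

theorem MemHSpan.mem_of_isHIdeal {E I : Set (R.data.A (Fin 1))} {x : R.data.A (Fin 1)}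
    (hx : MemHSpan R E x) (hI : R.IsHIdeal I) (hEI : E ⊆ I) : x ∈ I := by
  induction hx with
  | of_mem h => exact hEI h
  | pair_ract X b d c _ ih => exact hI X b d c ih

theorem MemHSpan.mono {E E' : Set (R.data.A (Fin 1))} (h : E ⊆ E') {x : R.data.A (Fin 1)}
    (hx : MemHSpan R E x) : MemHSpan R E' x :=
  hx.mem_of_isHIdeal (isHIdeal_setOf_memHSpan E') fun _ he => .of_mem (h he)

theorem MemHSpan.exists_finset {ι : Type*} {v : ι → R.data.A (Fin 1)} {x : R.data.A (Fin 1)}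
    (hx : MemHSpan R (Set.range v) x) : ∃ t : Finset ι, MemHSpan R (v '' t) x := by
  induction hx with
  | of_mem h =>
      obtain ⟨i, rfl⟩ := h
      exact ⟨{i}, .of_mem ⟨i, Finset.mem_singleton_self i, rfl⟩⟩
  | pair_ract X b d c _ ih =>
      choose t ht using ih
      have := Fintype.ofFinite X
      refine ⟨Finset.univ.biUnion t, .pair_ract X b d c fun x => (ht x).mono ?_⟩
      exact Set.image_mono
        (Finset.coe_subset.2 (Finset.subset_biUnion_of_mem t (Finset.mem_univ x)))

theorem op_mem_of_memHSpan_union (hsa : R.SelfAdjoint) {M : Set (R.data.A (Fin 1))}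
    (hM : R.IsHIdeal M) {a b : R.data.A (Fin 1)} (hab : R.data.op a b ∈ M)
    {x y : R.data.A (Fin 1)} (hx : MemHSpan R (M ∪ {a}) x) (hy : MemHSpan R (M ∪ {b}) y) :
    R.data.op x y ∈ M := by
  induction hx with
  | of_mem hx =>
      rcases hx with hx | rfl
      · exact R.op_mem_of_left_mem hsa hM hx y
      induction hy with
      | of_mem hy =>
          rcases hy with hy | rfl
          · exact R.op_mem_of_right_mem hM hy _
          · exact hab
      | pair_ract X b' d' c' _ ih =>
          rw [R.op_comm hsa, R.op_pair_ract]
          exact hM X b' d' _ fun z => by rw [R.op_comm hsa]; exact ih z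
  | pair_ract X b' d' c' _ ih =>
      rw [R.op_pair_ract]
      exact hM X b' d' _ ih

theorem opPow_notMem {p : SpecG R} {s : R.data.A (Fin 1)} (hs : s ∉ p.I) (n : ℕ) :
    R.data.opPow s n ∉ p.I := by
  induction n with
  | zero => exact p.prime.2.1
  | succ n ih => exact fun h => (p.prime.2.2 _ _ h).elim hs ih

theorem isHIdeal_sUnion {c : Set (Set (R.data.A (Fin 1)))} (hc : ∀ I ∈ c, R.IsHIdeal I)
    (hchain : IsChain (· ⊆ ·) c) (hne : c.Nonempty) : R.IsHIdeal (⋃₀ c) := by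
  intro X _ b d f hf
  have := Fintype.ofFinite X
  have : Nonempty c := hne.to_subtype
  have hsub : ((Finset.univ.image f : Finset (R.data.A (Fin 1))) : Set _)
      ⊆ ⋃ I : c, (I : Set (R.data.A (Fin 1))) := by
    intro a ha
    obtain ⟨x, _, rfl⟩ := Finset.mem_image.1 ha
    obtain ⟨I, hIc, hxI⟩ := hf x
    exact Set.mem_iUnion.2 ⟨⟨I, hIc⟩, hxI⟩
  obtain ⟨⟨J, hJc⟩, hJ⟩ :=
    hchain.directedOn.directed_val.exists_mem_subset_of_finset_subset_biUnion hsub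
  have hfJ : ∀ x, f x ∈ J := fun x => hJ (Finset.mem_image_of_mem f (Finset.mem_univ x))
  exact ⟨J, hJc, hc J hJc X b d f hfJ⟩

def AvoidingHIdeals (R : GenRing) (E : Set (R.data.A (Fin 1))) (s : R.data.A (Fin 1)) :
    Set (Set (R.data.A (Fin 1))) :=
  {I | R.IsHIdeal I ∧ E ⊆ I ∧ ∀ n, R.data.opPow s n ∉ I}

theorem isPrimeH_of_maximal (hsa : R.SelfAdjoint) {E M : Set (R.data.A (Fin 1))}
    {s : R.data.A (Fin 1)} (hM : Maximal (· ∈ R.AvoidingHIdeals E s) M) : R.IsPrimeH M := by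
  obtain ⟨⟨hMh, hEM, hMs⟩, hmax⟩ := hM
  have hpow : ∀ a ∉ M, ∃ n, MemHSpan R (M ∪ {a}) (R.data.opPow s n) := by
    intro a ha
    by_contra! h
    refine ha (hmax ⟨isHIdeal_setOf_memHSpan _, fun e he => .of_mem (.inl (hEM he)), h⟩
      (fun m hm => .of_mem (.inl hm)) (.of_mem (.inr rfl)))
  refine ⟨hMh, fun h1 => hMs 0 h1, fun a b hab => ?_⟩
  by_contra! h
  obtain ⟨n, hn⟩ := hpow a h.1
  obtain ⟨m, hm⟩ := hpow b h.2
  have hnm := R.op_mem_of_memHSpan_union hsa hMh hab hn hm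
  rw [← R.opPow_add] at hnm
  exact hMs _ hnm

theorem exists_opPow_memHSpan (hsa : R.SelfAdjoint) (E : Set (R.data.A (Fin 1)))
    (s : R.data.A (Fin 1)) (hcov : ∀ p : SpecG R, s ∉ p.I → ∃ e ∈ E, e ∉ p.I) :
    ∃ n, MemHSpan R E (R.data.opPow s n) := by
  by_contra! h
  have hub : ∀ c ⊆ R.AvoidingHIdeals E s, IsChain (· ⊆ ·) c → c.Nonempty →
      ∃ ub ∈ R.AvoidingHIdeals E s, ∀ I ∈ c, I ⊆ ub := by
    intro c hc hchain hne
    refine ⟨⋃₀ c, ⟨isHIdeal_sUnion (fun I hI => (hc hI).1) hchain hne, ?_, ?_⟩,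
      fun I hI => Set.subset_sUnion_of_mem hI⟩
    · obtain ⟨I, hIc⟩ := hne
      exact (hc hIc).2.1.trans (Set.subset_sUnion_of_mem hIc)
    · rintro n ⟨I, hIc, hnI⟩
      exact (hc hIc).2.2 n hnI
  obtain ⟨M, -, hM⟩ := zorn_subset_nonempty _ hub _
    ⟨isHIdeal_setOf_memHSpan E, fun _ he => .of_mem he, h⟩
  have hsM : s ∉ M := fun hs => hM.1.2.2 1 (by rwa [show R.data.opPow s 1 = s from R.op_one s])
  obtain ⟨e, he, heM⟩ := hcov ⟨M, isPrimeH_of_maximal hsa hM⟩ hsM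
  exact heM (hM.1.2.1 he)

theorem isOpen_basicOpen (u : R.data.A (Fin 1)) : IsOpen (R.basicOpen u) :=
  TopologicalSpace.GenerateOpen.basic _ ⟨u, rfl⟩

theorem op_notMem_iff (hsa : R.SelfAdjoint) (p : SpecG R) (u v : R.data.A (Fin 1)) :
    R.data.op u v ∉ p.I ↔ u ∉ p.I ∧ v ∉ p.I := by
  constructor
  · intro h
    exact ⟨fun hu => h (R.op_mem_of_left_mem hsa p.prime.1 hu v),
      fun hv => h (R.op_mem_of_right_mem p.prime.1 hv u)⟩
  · rintro ⟨hu, hv⟩ h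
    exact (p.prime.2.2 u v h).elim hu hv

theorem exists_basicOpen_subset (hsa : R.SelfAdjoint) {U : Set (SpecG R)} (hU : IsOpen U)
    {p : SpecG R} (hp : p ∈ U) : ∃ u, u ∉ p.I ∧ R.basicOpen u ⊆ U := by
  induction hU with
  | basic V hV =>
      obtain ⟨a, rfl⟩ := hV
      exact ⟨a, hp, subset_rfl⟩
  | univ => exact ⟨R.data.one, p.prime.2.1, Set.subset_univ _⟩
  | inter U₁ U₂ _ _ ih₁ ih₂ =>
      obtain ⟨u, hu, hU₁⟩ := ih₁ hp.1
      obtain ⟨v, hv, hU₂⟩ := ih₂ hp.2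
      refine ⟨R.data.op u v, (op_notMem_iff hsa p u v).2 ⟨hu, hv⟩, fun q hq => ?_⟩
      have h := (op_notMem_iff hsa q u v).1 hq
      exact ⟨hU₁ h.1, hU₂ h.2⟩
  | sUnion S _ ih =>
      obtain ⟨V, hVS, hpV⟩ := hp
      obtain ⟨u, hu, hsubV⟩ := ih V hVS hpV
      exact ⟨u, hu, hsubV.trans (Set.subset_sUnion_of_mem hVS)⟩

theorem exists_finset_cover (hsa : R.SelfAdjoint) {ι : Type*} (v : ι → R.data.A (Fin 1))
    {s : R.data.A (Fin 1)} (hcov : ∀ p : SpecG R, s ∉ p.I → ∃ i, v i ∉ p.I) :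
    ∃ t : Finset ι, ∀ p : SpecG R, s ∉ p.I → ∃ i ∈ t, v i ∉ p.I := by
  obtain ⟨n, hn⟩ := exists_opPow_memHSpan hsa (Set.range v) s fun p hp =>
    (hcov p hp).elim fun i hi => ⟨v i, ⟨i, rfl⟩, hi⟩
  obtain ⟨t, ht⟩ := hn.exists_finset
  refine ⟨t, fun p hp => ?_⟩
  by_contra! h
  exact opPow_notMem hp n (ht.mem_of_isHIdeal p.prime.1 (by rintro _ ⟨i, hi, rfl⟩; exact h i hi))

end GenRing

namespace GenRing

variable {R : GenRing}

theorem mem_adjPowers_iff (hsa : R.SelfAdjoint) {s x : R.data.A (Fin 1)} :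
    x ∈ {x | ∃ n m : ℕ, x = R.data.op (R.data.opPow s n) (R.data.adj (R.data.opPow s m))} ↔
      ∃ k, x = R.data.opPow s k := by
  constructor
  · rintro ⟨n, m, rfl⟩
    exact ⟨n + m, by rw [hsa _, R.opPow_add]⟩
  · rintro ⟨k, rfl⟩
    exact ⟨k, 0, by rw [hsa _]; exact (R.op_one _).symm⟩

namespace IsLocalizationAt

variable {L : GenRing} {S : Set (R.data.A (Fin 1))} {φ : GenRingHom R L}

theorem lact_cancel (hloc : R.IsLocalizationAt S φ) {s : R.data.A (Fin 1)} (hs : s ∈ S)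
    {X : Type} [Finite X] {x y : L.data.A X}
    (hxy : L.data.lact (φ.app (Fin 1) s) x = L.data.lact (φ.app (Fin 1) s) y) : x = y :=
  let ⟨_, ht, _⟩ := hloc.1 s hs
  L.lact_cancel_of_op_eq_one _ _ ht x y hxy

theorem exists_opPow_lact_eq (hsa : R.SelfAdjoint) {s : R.data.A (Fin 1)}
    (hloc : R.IsLocalizationAt
      {x | ∃ n m : ℕ, x = R.data.op (R.data.opPow s n) (R.data.adj (R.data.opPow s m))} φ)
    {X : Type} [Finite X] (l : L.data.A X) :
    ∃ k a, L.data.lact (φ.app (Fin 1) (R.data.opPow s k)) l = φ.app X a := by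
  obtain ⟨a, σ, hσ, h⟩ := hloc.2.1 X l
  obtain ⟨k, rfl⟩ := (mem_adjPowers_iff hsa).1 hσ
  exact ⟨k, a, h⟩

end IsLocalizationAt

section StructureSheaf

variable {Lp : SpecG R → GenRing} {φp : ∀ p : SpecG R, GenRingHom R (Lp p)}

theorem exists_opPow_lact_eq_of_app_eq (hsa : R.SelfAdjoint)
    (hLp : ∀ p : SpecG R, R.IsLocalizationAt {a | a ∉ p.I} (φp p)) {u : R.data.A (Fin 1)}
    {X : Type} [Finite X] {m₁ m₂ : R.data.A X}
    (h : ∀ p : SpecG R, u ∉ p.I → (φp p).app X m₁ = (φp p).app X m₂) :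
    ∃ n, R.data.lact (R.data.opPow u n) m₁ = R.data.lact (R.data.opPow u n) m₂ := by
  obtain ⟨n, hn⟩ := exists_opPow_memHSpan hsa {σ | R.data.lact σ m₁ = R.data.lact σ m₂} u
    fun p hp =>
      let ⟨σ, hσp, hσ⟩ := ((hLp p).2.2 X m₁ m₂).1 (h p hp)
      ⟨σ, hσ, hσp⟩
  exact ⟨n, hn.mem_of_isHIdeal (R.isHIdeal_setOf_lact_eq m₁ m₂) subset_rfl⟩

variable {s : R.data.A (Fin 1)} {X : Type} [Finite X]
  {g : (q : {p : SpecG R // p ∈ R.basicOpen s}) → (Lp q.1).data.A X}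

/-- `g = a / v` at the points of `D_s ∩ D_v`. -/
def IsFractionOn (φp : ∀ p : SpecG R, GenRingHom R (Lp p))
    (g : (q : {p : SpecG R // p ∈ R.basicOpen s}) → (Lp q.1).data.A X)
    (v : R.data.A (Fin 1)) (a : R.data.A X) : Prop :=
  ∀ r : {p : SpecG R // p ∈ R.basicOpen s}, v ∉ r.1.I →
    (Lp r.1).data.lact ((φp r.1).app (Fin 1) v) (g r) = (φp r.1).app X a

theorem _root_.LocallyFraction.exists_isFractionOn (hsa : R.SelfAdjoint)
    (hg : LocallyFraction R s Lp φp X g) (q : {p : SpecG R // p ∈ R.basicOpen s}) :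
    ∃ v a, v ∉ q.1.I ∧ R.basicOpen v ⊆ R.basicOpen s ∧ IsFractionOn φp g v a := by
  obtain ⟨U, hU, hqU, hUs, a, t, ht, hfr⟩ := hg q
  obtain ⟨w, hwq, hwU⟩ := exists_basicOpen_subset hsa hU hqU
  refine ⟨R.data.op w t, R.data.lact w a, (op_notMem_iff hsa _ w t).2 ⟨hwq, ht _ hqU⟩,
    fun p hp => hUs (hwU ((op_notMem_iff hsa p w t).1 hp).1), fun r hr => ?_⟩
  rw [(φp r.1).app_op, (Lp r.1).lact_lact, hfr r (hwU ((op_notMem_iff hsa r.1 w t).1 hr).1),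
    ← (φp r.1).app_lact]

theorem exists_compatible_isFractionOn (hsa : R.SelfAdjoint)
    (hLp : ∀ p : SpecG R, R.IsLocalizationAt {a | a ∉ p.I} (φp p)) {ι : Type*} [Finite ι]
    (v : ι → R.data.A (Fin 1)) (a : ι → R.data.A X)
    (hvs : ∀ i, R.basicOpen (v i) ⊆ R.basicOpen s) (hfr : ∀ i, IsFractionOn φp g (v i) (a i)) :
    ∃ N : ℕ,
      (∀ i j, R.data.lact (R.data.opPow (v j) (N + 1)) (R.data.lact (R.data.opPow (v i) N) (a i))
        = R.data.lact (R.data.opPow (v i) (N + 1)) (R.data.lact (R.data.opPow (v j) N) (a j))) ∧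
      ∀ i, IsFractionOn φp g (R.data.opPow (v i) (N + 1))
        (R.data.lact (R.data.opPow (v i) N) (a i)) := by
  have hpair : ∀ i j, ∃ n,
      R.data.lact (R.data.opPow (R.data.op (v i) (v j)) n) (R.data.lact (v j) (a i))
      = R.data.lact (R.data.opPow (R.data.op (v i) (v j)) n) (R.data.lact (v i) (a j)) := by
    refine fun i j => exists_opPow_lact_eq_of_app_eq hsa hLp fun p hp => ?_
    obtain ⟨hi, hj⟩ := (op_notMem_iff hsa p _ _).1 hp
    have hps : p ∈ R.basicOpen s := hvs i hi
    rw [(φp p).app_lact, (φp p).app_lact, ← hfr i ⟨p, hps⟩ hi, ← hfr j ⟨p, hps⟩ hj,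
      ← (Lp p).lact_lact, ← (Lp p).lact_lact, ← (φp p).app_op, ← (φp p).app_op, R.op_comm hsa (v j)]
  choose n hn using hpair
  have := Fintype.ofFinite ι
  let N := Finset.univ.sup fun ij : ι × ι => n ij.1 ij.2
  have hN : ∀ i j, R.data.lact (R.data.opPow (R.data.op (v i) (v j)) N) (R.data.lact (v j) (a i))
      = R.data.lact (R.data.opPow (R.data.op (v i) (v j)) N) (R.data.lact (v i) (a j)) := by
    intro i j
    obtain ⟨k, hk⟩ : ∃ k, N = k + n i j :=
      ⟨N - n i j, (Nat.sub_add_cancel (Finset.le_sup (f := fun ij : ι × ι => n ij.1 ij.2)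
        (Finset.mem_univ (i, j)))).symm⟩
    rw [hk, R.opPow_add, R.lact_lact, R.lact_lact, hn i j]
  refine ⟨N, fun i j => ?_, fun i r hr => ?_⟩
  · rw [← R.lact_lact, ← R.lact_lact, R.opPow_succ_op_opPow hsa (v i) (v j),
      R.opPow_succ_op_opPow hsa (v j) (v i), R.op_comm hsa (v j) (v i), R.lact_lact, R.lact_lact]
    exact hN i j
  · have hr' : v i ∉ r.1.I := ((op_notMem_iff hsa _ _ _).1 hr).1
    rw [R.opPow_succ, R.op_comm hsa, (φp r.1).app_op, (Lp r.1).lact_lact, hfr i r hr',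
      ← (φp r.1).app_lact]

theorem lact_eq_of_compatible (hsa : R.SelfAdjoint)
    (hLp : ∀ p : SpecG R, R.IsLocalizationAt {a | a ∉ p.I} (φp p)) {ι : Type*}
    (v : ι → R.data.A (Fin 1)) (a : ι → R.data.A X)
    (hcov : ∀ p : SpecG R, s ∉ p.I → ∃ i, v i ∉ p.I)
    (hcompat : ∀ i j, R.data.lact (v j) (a i) = R.data.lact (v i) (a j))
    (hfr : ∀ i, IsFractionOn φp g (v i) (a i)) (i : ι) (r : {p : SpecG R // p ∈ R.basicOpen s}) :
    (Lp r.1).data.lact ((φp r.1).app (Fin 1) (v i)) (g r) = (φp r.1).app X (a i) := by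
  obtain ⟨j, hj⟩ := hcov r.1 r.2
  refine (hLp r.1).lact_cancel hj ?_
  rw [← (Lp r.1).lact_lact, ← (φp r.1).app_op, R.op_comm hsa, (φp r.1).app_op, (Lp r.1).lact_lact,
    hfr j r hj, ← (φp r.1).app_lact, ← (φp r.1).app_lact, hcompat]

theorem exists_opPow_lact_eq_of_cover (hsa : R.SelfAdjoint) {ι : Type*}
    (v : ι → R.data.A (Fin 1)) (a : ι → R.data.A X)
    (hcov : ∀ p : SpecG R, s ∉ p.I → ∃ i, v i ∉ p.I)
    (h : ∀ i (r : {p : SpecG R // p ∈ R.basicOpen s}),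
      (Lp r.1).data.lact ((φp r.1).app (Fin 1) (v i)) (g r) = (φp r.1).app X (a i)) :
    ∃ n A, ∀ r : {p : SpecG R // p ∈ R.basicOpen s},
      (Lp r.1).data.lact ((φp r.1).app (Fin 1) (R.data.opPow s n)) (g r) = (φp r.1).app X A := by
  obtain ⟨n, hn⟩ := exists_opPow_memHSpan hsa (Set.range v) s fun p hp =>
    (hcov p hp).elim fun i hi => ⟨v i, ⟨i, rfl⟩, hi⟩
  exact ⟨n, hn.mem_of_isHIdeal
    (R.isHIdeal_setOf_exists_lact_eq (L := fun r : {p : SpecG R // p ∈ R.basicOpen s} => Lp r.1)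
      (fun r => φp r.1) g)
    (by rintro _ ⟨i, rfl⟩; exact ⟨a i, h i⟩)⟩

theorem _root_.LocallyFraction.exists_opPow_lact_eq (hsa : R.SelfAdjoint)
    (hLp : ∀ p : SpecG R, R.IsLocalizationAt {a | a ∉ p.I} (φp p))
    (hg : LocallyFraction R s Lp φp X g) :
    ∃ n A, ∀ r : {p : SpecG R // p ∈ R.basicOpen s},
      (Lp r.1).data.lact ((φp r.1).app (Fin 1) (R.data.opPow s n)) (g r) = (φp r.1).app X A := by
  choose v a hvq hvs hfr using hg.exists_isFractionOn hsa
  obtain ⟨t, ht⟩ := exists_finset_cover hsa v fun p hp => ⟨⟨p, hp⟩, hvq ⟨p, hp⟩⟩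
  obtain ⟨N, hcompat, hfr'⟩ := exists_compatible_isFractionOn hsa hLp (fun i : t => v i)
    (fun i => a i) (fun i => hvs i) (fun i => hfr i)
  have hcov : ∀ p : SpecG R, s ∉ p.I → ∃ i : t, R.data.opPow (v i) (N + 1) ∉ p.I := fun p hp =>
    let ⟨i, hit, hi⟩ := ht p hp
    ⟨⟨i, hit⟩, opPow_notMem hi _⟩
  exact exists_opPow_lact_eq_of_cover hsa _ _ hcov
    (lact_eq_of_compatible hsa hLp _ _ hcov hcompat hfr')

namespace IsLocalizationAt

variable {L : GenRing} {φ : GenRingHom R L} {ρ : ∀ p : SpecG R, GenRingHom L (Lp p)}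

theorem locallyFraction_comparison (hsa : R.SelfAdjoint)
    (hloc : R.IsLocalizationAt
      {x | ∃ n m : ℕ, x = R.data.op (R.data.opPow s n) (R.data.adj (R.data.opPow s m))} φ)
    (hρ : ∀ (p : SpecG R) (X : Type) [Finite X] (a : R.data.A X),
      (ρ p).app X (φ.app X a) = (φp p).app X a)
    (l : L.data.A X) : LocallyFraction R s Lp φp X (fun q => (ρ q.1).app X l) := by
  intro q
  obtain ⟨k, a, h⟩ := hloc.exists_opPow_lact_eq hsa l
  refine ⟨R.basicOpen s, isOpen_basicOpen s, q.2, subset_rfl, a, R.data.opPow s k,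
    fun r hr => opPow_notMem hr k, fun r _ => ?_⟩
  have h' := congrArg ((ρ r.1).app X) h
  rwa [(ρ r.1).app_lact, hρ, hρ] at h'

theorem eq_of_forall_comparison_eq (hsa : R.SelfAdjoint)
    (hloc : R.IsLocalizationAt
      {x | ∃ n m : ℕ, x = R.data.op (R.data.opPow s n) (R.data.adj (R.data.opPow s m))} φ)
    (hLp : ∀ p : SpecG R, R.IsLocalizationAt {a | a ∉ p.I} (φp p))
    (hρ : ∀ (p : SpecG R) (X : Type) [Finite X] (a : R.data.A X),
      (ρ p).app X (φ.app X a) = (φp p).app X a)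
    {l₁ l₂ : L.data.A X} (h : ∀ p : SpecG R, s ∉ p.I → (ρ p).app X l₁ = (ρ p).app X l₂) :
    l₁ = l₂ := by
  obtain ⟨k₁, a₁, h₁⟩ := hloc.exists_opPow_lact_eq hsa l₁
  obtain ⟨k₂, a₂, h₂⟩ := hloc.exists_opPow_lact_eq hsa l₂
  have e₁ : L.data.lact (φ.app (Fin 1) (R.data.opPow s (k₂ + k₁))) l₁
      = φ.app X (R.data.lact (R.data.opPow s k₂) a₁) := by
    rw [R.opPow_add, φ.app_op, L.lact_lact, h₁, φ.app_lact]
  have e₂ : L.data.lact (φ.app (Fin 1) (R.data.opPow s (k₂ + k₁))) l₂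
      = φ.app X (R.data.lact (R.data.opPow s k₁) a₂) := by
    rw [Nat.add_comm, R.opPow_add, φ.app_op, L.lact_lact, h₂, φ.app_lact]
  obtain ⟨n, hn⟩ := exists_opPow_lact_eq_of_app_eq hsa hLp (u := s)
    (m₁ := R.data.lact (R.data.opPow s k₂) a₁) (m₂ := R.data.lact (R.data.opPow s k₁) a₂)
    fun p hp => by rw [← hρ, ← hρ, ← e₁, ← e₂, (ρ p).app_lact, (ρ p).app_lact, h p hp]
  have hpow : ∀ k, R.data.opPow s k ∈
      {x | ∃ n m : ℕ, x = R.data.op (R.data.opPow s n) (R.data.adj (R.data.opPow s m))} :=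
    fun k => (mem_adjPowers_iff hsa).2 ⟨k, rfl⟩
  refine hloc.lact_cancel (hpow (k₂ + k₁)) (hloc.lact_cancel (hpow n) ?_)
  rw [e₁, e₂, ← φ.app_lact, ← φ.app_lact, hn]

end IsLocalizationAt

end StructureSheaf

end GenRing

/-- `φ : R → L` presents `L` as `R_s`, `φp 𝔭 : R → Lp 𝔭` presents `Lp 𝔭` as `R_𝔭`, and the
`ρ 𝔭 : L → Lp 𝔭` are the comparison maps. The isomorphism `Ψ : (R_s)_X → O_R(D_s)_X` is
`l ↦ (𝔮 ↦ ρ 𝔮 l)`, with `O_R(D_s)_X` the sections that are locally fractions. -/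
theorem structure_sheaf_sections_iso (R : GenRing)
    (hsa : ∀ x : R.data.A (Fin 1), R.data.adj x = x) (s : R.data.A (Fin 1))
    (L : GenRing) (φ : GenRingHom R L)
    (hloc : R.IsLocalizationAt
      {x | ∃ n m : ℕ, x = R.data.op (R.data.opPow s n) (R.data.adj (R.data.opPow s m))} φ)
    (Lp : SpecG R → GenRing) (φp : ∀ p : SpecG R, GenRingHom R (Lp p))
    (hLp : ∀ p : SpecG R, R.IsLocalizationAt {a | a ∉ p.I} (φp p))
    (ρ : ∀ p : SpecG R, GenRingHom L (Lp p))
    (hρ : ∀ (p : SpecG R) (X : Type) [Finite X] (a : R.data.A X),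
        (ρ p).app X (φ.app X a) = (φp p).app X a) :
    ∀ (X : Type) [Finite X],
      (∀ l : L.data.A X,
          LocallyFraction R s Lp φp X (fun q => (ρ q.1).app X l)) ∧
        ∀ g : (q : {p : SpecG R // p ∈ R.basicOpen s}) → (Lp q.1).data.A X,
          LocallyFraction R s Lp φp X g →
            ∃! l : L.data.A X,
              ∀ q : {p : SpecG R // p ∈ R.basicOpen s}, (ρ q.1).app X l = g q := by
  intro X _
  refine ⟨hloc.locallyFraction_comparison hsa hρ, fun g hg => ?_⟩
  obtain ⟨n, A, hA⟩ := hg.exists_opPow_lact_eq hsa hLp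
  obtain ⟨t, -, ht⟩ := hloc.1 _ ((GenRing.mem_adjPowers_iff hsa).2 ⟨n, rfl⟩)
  have hsec : ∀ q : {p : SpecG R // p ∈ R.basicOpen s},
      (ρ q.1).app X (L.data.lact t (φ.app X A)) = g q := fun q => by
    refine (hLp q.1).lact_cancel (GenRing.opPow_notMem q.2 n) ?_
    rw [hA q, ← hρ q.1 (Fin 1), ← (ρ q.1).app_lact, ← L.lact_lact, ht, L.one_lact, hρ]
  exact ⟨_, hsec, fun l hl => hloc.eq_of_forall_comparison_eq hsa hLp hρ fun p hp =>
    (hl ⟨p, hp⟩).trans (hsec ⟨p, hp⟩).symm⟩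

end
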